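/- arXiv:2411.06235 — 9 statements merged into one kernel-verified Lean document; each statement's English description precedes it below -/
import Mathlib

section
/- Let K be a field of characteristic 0, δ ∈ K a nonzero element such that −δ is not a square in K, L = K(ω) with ω² = −δ, and σ the nontrivial K-automorphism of L. Let G be a finite group, α an automorphism of G with α∘α = id, and ρ : G → GL_n(L) a representation. Assume that every matrix in M_n(L) that commutes with ρ(g) for all g ∈ G is a scalar multiple of the identity, and that X ∈ GL_n(L) satisfies X·ρ(g)·X⁻¹ = (ρ(α(g)))^σ for all g ∈ G, where M^σ denotes entrywise application of σ. Then there exists λ ∈ K, λ ≠ 0, such that X^σ·X = λ·I_n. -/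
section Aux

variable {L : Type} [Field L] {n : ℕ}

lemma matmapmul (σ : L →+* L) (A B : Matrix (Fin n) (Fin n) L) :
    (A * B).map σ = A.map σ * B.map σ := Matrix.map_mul

lemma matmapone (σ : L →+* L) :
    (1 : Matrix (Fin n) (Fin n) L).map σ = 1 :=
  Matrix.map_one σ (map_zero σ) (map_one σ)

lemma matmapsmul (σ : L →+* L) (c : L) :
    ((c • (1 : Matrix (Fin n) (Fin n) L))).map σ = σ c • 1 := by
  ext i j
  simp [Matrix.map_apply, Matrix.one_apply, apply_ite σ]

end Aux

/-- If `X ρ(g) X⁻¹ = ρ(α g)^σ` for all `g` and `ρ` is (Schur-)irreducible,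
then `X^σ X = λ · 1` for some nonzero `λ ∈ K`. -/
theorem unitary_conjugation_scalar
    {K L : Type} [Field K] [CharZero K] [Field L] [Algebra K L]
    (δ : K) (hδ : δ ≠ 0) (hδns : ¬ ∃ c : K, c ^ 2 = -δ)
    (ω : L) (hω : ω ^ 2 = algebraMap K L (-δ))
    (hL : ∀ x : L, ∃ a b : K, x = algebraMap K L a + algebraMap K L b * ω)
    (σ : L ≃ₐ[K] L) (hσne : σ ≠ AlgEquiv.refl) (hσ2 : ∀ x : L, σ (σ x) = x)
    {G : Type} [Group G] [Finite G]
    (α : G ≃* G) (hα : ∀ g : G, α (α g) = g)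
    (n : ℕ) (ρ : G →* Matrix.GeneralLinearGroup (Fin n) L)
    (hSchur : ∀ M : Matrix (Fin n) (Fin n) L,
      (∀ g : G, M * (ρ g : Matrix (Fin n) (Fin n) L) = (ρ g : Matrix (Fin n) (Fin n) L) * M) →
      ∃ c : L, M = c • (1 : Matrix (Fin n) (Fin n) L))
    (X : Matrix.GeneralLinearGroup (Fin n) L)
    (hX : ∀ g : G, (X : Matrix (Fin n) (Fin n) L) * (ρ g : Matrix (Fin n) (Fin n) L) *
        ((X⁻¹ : Matrix.GeneralLinearGroup (Fin n) L) : Matrix (Fin n) (Fin n) L) =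
        ((ρ (α g) : Matrix (Fin n) (Fin n) L)).map σ) :
    ∃ lam : K, lam ≠ 0 ∧
      ((X : Matrix (Fin n) (Fin n) L)).map σ * (X : Matrix (Fin n) (Fin n) L) =
        algebraMap K L lam • (1 : Matrix (Fin n) (Fin n) L) := by
  rcases Nat.eq_zero_or_pos n with hn | hn
  · refine ⟨1, one_ne_zero, ?_⟩
    subst hn
    apply Subsingleton.elim
  set σR : L →+* L := (σ : L →+* L) with hσR
  have hσRapp : ∀ x, σR x = σ x := fun x => rfl
  set Xm : Matrix (Fin n) (Fin n) L := (X : Matrix (Fin n) (Fin n) L) with hXm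
  set Xi : Matrix (Fin n) (Fin n) L :=
    ((X⁻¹ : Matrix.GeneralLinearGroup (Fin n) L) : Matrix (Fin n) (Fin n) L) with hXi
  have hXXi : Xm * Xi = 1 := X.mul_inv
  have hXiX : Xi * Xm = 1 := X.inv_mul
  -- σ applied twice to a matrix is the identity
  have hmap2 : ∀ A : Matrix (Fin n) (Fin n) L, (A.map σR).map σR = A := by
    intro A; ext i j; simp [Matrix.map_apply, hσRapp, hσ2]
  -- key commutation
  have key : ∀ g : G, (Xm.map σR * Xm) * (ρ g : Matrix (Fin n) (Fin n) L) =
      (ρ g : Matrix (Fin n) (Fin n) L) * (Xm.map σR * Xm) := by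
    intro g
    have h1 : Xm * (ρ (α g) : Matrix (Fin n) (Fin n) L) * Xi =
        ((ρ g : Matrix (Fin n) (Fin n) L)).map σR := by
      have := hX (α g)
      rwa [hα g] at this
    have h2 : Xm.map σR * ((ρ (α g) : Matrix (Fin n) (Fin n) L)).map σR * Xi.map σR =
        (ρ g : Matrix (Fin n) (Fin n) L) := by
      have := congrArg (fun A => A.map σR) h1
      simpa [matmapmul, hmap2] using this
    have h3 : ((ρ (α g) : Matrix (Fin n) (Fin n) L)).map σR =
        Xm * (ρ g : Matrix (Fin n) (Fin n) L) * Xi := (hX g).symm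
    rw [h3] at h2
    -- h2 : Xm.map σR * (Xm * ρ g * Xi) * Xi.map σR = ρ g
    calc (Xm.map σR * Xm) * (ρ g : Matrix (Fin n) (Fin n) L)
        = (Xm.map σR * (Xm * (ρ g : Matrix (Fin n) (Fin n) L) * Xi) * Xi.map σR) *
            (Xm.map σR * Xm) := by
          have hinv : (Xi * Xi.map σR) * (Xm.map σR * Xm) = 1 := by
            have : Xi.map σR * Xm.map σR = 1 := by
              rw [← matmapmul, hXiX, matmapone]
            calc (Xi * Xi.map σR) * (Xm.map σR * Xm)
                = Xi * (Xi.map σR * Xm.map σR) * Xm := by noncomm_ring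
              _ = Xi * 1 * Xm := by rw [this]
              _ = 1 := by rw [mul_one, hXiX]
          calc (Xm.map σR * Xm) * (ρ g : Matrix (Fin n) (Fin n) L)
              = (Xm.map σR * Xm) * (ρ g : Matrix (Fin n) (Fin n) L) *
                  ((Xi * Xi.map σR) * (Xm.map σR * Xm)) := by rw [hinv, mul_one]
            _ = (Xm.map σR * (Xm * (ρ g : Matrix (Fin n) (Fin n) L) * Xi) * Xi.map σR) *
                  (Xm.map σR * Xm) := by noncomm_ring
      _ = (ρ g : Matrix (Fin n) (Fin n) L) * (Xm.map σR * Xm) := by rw [h2]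
  obtain ⟨c, hc⟩ := hSchur (Xm.map σR * Xm) key
  -- S is invertible, so c ≠ 0
  have hT : (Xm.map σR * Xm) * (Xi * Xi.map σR) = 1 := by
    have h1 : Xm.map σR * Xi.map σR = 1 := by rw [← matmapmul, hXXi, matmapone]
    calc (Xm.map σR * Xm) * (Xi * Xi.map σR)
        = Xm.map σR * (Xm * Xi) * Xi.map σR := by noncomm_ring
      _ = Xm.map σR * 1 * Xi.map σR := by rw [hXXi]
      _ = 1 := by rw [mul_one, h1]
  obtain ⟨i⟩ := Fin.pos_iff_nonempty.mp hn
  have hcne : c ≠ 0 := by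
    intro h
    rw [hc, h, zero_smul, zero_mul] at hT
    have := congrFun (congrFun hT i) i
    simp [Matrix.one_apply] at this
  -- σ c = c
  have hswap : Xm * Xm.map σR = c • 1 := by
    calc Xm * Xm.map σR
        = Xm * (Xm.map σR * Xm) * Xi := by
          rw [mul_assoc, mul_assoc, hXXi, mul_one]
      _ = Xm * (c • (1 : Matrix (Fin n) (Fin n) L)) * Xi := by rw [hc]
      _ = c • (Xm * Xi) := by
          simp [mul_smul_comm, smul_mul_assoc]
      _ = c • 1 := by rw [hXXi]
  have hσc : σ c = c := by
    have h1 : (Xm.map σR * Xm).map σR = Xm * Xm.map σR := by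
      rw [matmapmul, hmap2]
    have h2 : σR c • (1 : Matrix (Fin n) (Fin n) L) = c • 1 := by
      rw [← matmapsmul σR c, ← hc, h1, hswap, hc]
    have := congrFun (congrFun h2 i) i
    simpa [Matrix.one_apply, hσRapp] using this
  -- σ ω = -ω
  have hωne : ω ≠ 0 := by
    intro h
    apply hδ
    have : algebraMap K L (-δ) = 0 := by rw [← hω, h]; ring
    have := (map_eq_zero _).mp this
    exact neg_eq_zero.mp this
  have hσω : σ ω = -ω := by
    have hsq : (σ ω) ^ 2 = ω ^ 2 := by
      rw [← map_pow, hω, AlgEquiv.commutes]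
    have : (σ ω - ω) * (σ ω + ω) = 0 := by linear_combination hsq
    rcases mul_eq_zero.mp this with h | h
    · exfalso
      apply hσne
      have hfix : σ ω = ω := sub_eq_zero.mp h
      ext x
      obtain ⟨a, b, rfl⟩ := hL x
      simp [map_add, map_mul, AlgEquiv.commutes, hfix]
    · exact add_eq_zero_iff_eq_neg.mp h
  -- c ∈ K
  obtain ⟨a, b, hab⟩ := hL c
  have hb : algebraMap K L b * ω = 0 := by
    have h1 : σ c = algebraMap K L a - algebraMap K L b * ω := by
      rw [hab]
      simp [map_add, map_mul, AlgEquiv.commutes, hσω]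
      ring
    have h2 : algebraMap K L a + algebraMap K L b * ω
        = algebraMap K L a - algebraMap K L b * ω := by
      rw [← hab, ← h1, hσc]
    have : (2 : L) * (algebraMap K L b * ω) = 0 := by linear_combination h2
    rcases mul_eq_zero.mp this with h | h
    · exfalso
      have : (2 : L) = algebraMap K L 2 := (map_ofNat (algebraMap K L) 2).symm
      rw [this] at h
      have := (map_eq_zero _).mp h
      norm_num at this
    · exact h
  have hcK : c = algebraMap K L a := by rw [hab, hb, add_zero]
  refine ⟨a, ?_, ?_⟩
  · intro h
    apply hcne
    rw [hcK, h, map_zero]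
  · rw [← hcK]; exact hc
end

section
/- Let K be a field of characteristic 0, δ ∈ K a nonzero element such that −δ is not a square in K, L = K(ω) with ω² = −δ, and σ the nontrivial K-automorphism of L. Let G be a finite group, α an automorphism of G with α∘α = id, and ρ : G → GL_n(L) a representation such that the K-subalgebra of M_n(L) (regarded as a K-algebra) generated by {ρ(g) : g ∈ G} is all of M_n(L), and such that there exists X ∈ GL_n(L) with X·ρ(g)·X⁻¹ = (ρ(α(g)))^σ for all g ∈ G. Let A be the K-linear span of {ρ(g) + ρ(α(g)) : g ∈ G} inside M_n(L). Then: (1) A is closed under matrix multiplication, i.e. A is a K-subalgebra of M_n(L); (2) M_n(L) = A ⊕ ω·A as K-vector spaces; (3) dim_K A = n²; (4) A is a central simple K-algebra, i.e. A has center K·I_n and has no two-sided ideals other than 0 and A. -/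
/-!
Put `θ M = X⁻¹ * M^σ * X`. It is a `σ`-semilinear `K`-algebra automorphism of `M_n(L)` with
`θ (ρ g) = ρ (α g)`; since the `ρ g` generate `M_n(L)`, `θ` is an involution. So `A`, spanned by
the `ρ g + θ (ρ g)`, is the image of `1 + θ`, i.e. the fixed algebra of `θ`, while `σ ω = -ω` makes
`ω • A` the `(-1)`-eigenspace; this gives `M_n(L) = A ⊕ ω • A` and `dim_K A = n²`.
An element of `A` central in `A` is central in `M_n(L) = L • A`, hence a scalar of `L` fixed by `σ`,
hence in `K`. The `L`-span of a nonzero ideal `I` of `A` is a two-sided ideal of the simple ring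
`M_n(L)`, so it contains `A`; and `x ↦ x + θ x` maps that span into `I`, since it sends `c • y`
to `(c + σ c) • y` for `y ∈ I`, while on `A` it is multiplication by `2`.
-/

open Module Module.End

section LinearInvolution

variable {K V : Type*} [Field K] [NeZero (2 : K)] [AddCommGroup V] [Module K V] {θ : End K V}

theorem range_one_add_eq_eigenspace_one (hθ : Function.Involutive θ) :
    LinearMap.range (1 + θ) = eigenspace θ 1 := by
  ext x
  simp only [LinearMap.mem_range, mem_eigenspace_iff, one_smul, LinearMap.add_apply, one_apply]
  constructor
  · rintro ⟨y, rfl⟩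
    rw [map_add, hθ, add_comm]
  · intro hx
    exact ⟨(2 : K)⁻¹ • x, by rw [map_smul, hx]; match_scalars; field_simp; norm_num⟩

theorem span_range_add_eq_eigenspace_one (hθ : Function.Involutive θ) {ι : Type*} {v : ι → V}
    (hv : Submodule.span K (Set.range v) = ⊤) :
    Submodule.span K (Set.range fun i => v i + θ (v i)) = eigenspace θ 1 := by
  rw [← range_one_add_eq_eigenspace_one hθ, LinearMap.range_eq_map, ← hv, ← Submodule.span_image,
    ← Set.range_comp]
  rfl

theorem isCompl_eigenspace_one_neg_one (hθ : Function.Involutive θ) :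
    IsCompl (eigenspace θ 1) (eigenspace θ (-1)) := by
  refine ⟨θ.eigenspaces_iSupIndep.pairwiseDisjoint fun h => two_ne_zero (α := K) ?_,
    codisjoint_iff.2 <| eq_top_iff.2 fun x _ => Submodule.mem_sup.2
      ⟨(2 : K)⁻¹ • (x + θ x), ?_, (2 : K)⁻¹ • (x - θ x), ?_, ?_⟩⟩
  · linear_combination h
  · rw [mem_eigenspace_iff, map_smul, map_add, hθ]; module
  · rw [mem_eigenspace_iff, map_smul, map_sub, hθ]; module
  · match_scalars <;> field_simp <;> ring

end LinearInvolution

section QuadraticExtension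

variable {K L : Type*} [Field K] [Field L] [Algebra K L] {σ : L ≃ₐ[K] L} {ω : L}

theorem AlgEquiv.apply_ne_self_of_ne_refl
    (hL : ∀ x : L, ∃ a b : K, x = algebraMap K L a + algebraMap K L b * ω)
    (hσ : σ ≠ AlgEquiv.refl) : σ ω ≠ ω := by
  intro hσω
  refine hσ (AlgEquiv.ext fun x => ?_)
  obtain ⟨a, b, rfl⟩ := hL x
  simp [hσω]

theorem AlgEquiv.apply_eq_neg_of_sq_eq_algebraMap {d : K} (hω : ω ^ 2 = algebraMap K L d)
    (hσω : σ ω ≠ ω) : σ ω = -ω := by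
  have hσω2 : σ ω ^ 2 = ω ^ 2 := by rw [← map_pow, hω, σ.commutes]
  have h : (σ ω - ω) * (σ ω + ω) = 0 := by linear_combination hσω2
  exact eq_neg_of_add_eq_zero_left ((mul_eq_zero.1 h).resolve_left (sub_ne_zero.2 hσω))

theorem AlgEquiv.mem_range_algebraMap_of_apply_eq_self
    (hL : ∀ x : L, ∃ a b : K, x = algebraMap K L a + algebraMap K L b * ω)
    (hσω : σ ω ≠ ω) {c : L} (hc : σ c = c) : c ∈ Set.range (algebraMap K L) := by
  obtain ⟨a, b, rfl⟩ := hL c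
  simp only [map_add, map_mul, AlgEquiv.commutes] at hc
  have hb : algebraMap K L b = 0 :=
    (mul_eq_zero.1 (by linear_combination hc)).resolve_right (sub_ne_zero.2 hσω)
  exact ⟨a, by rw [hb, zero_mul, add_zero]⟩

theorem finrank_eq_two_of_apply_ne_self
    (hL : ∀ x : L, ∃ a b : K, x = algebraMap K L a + algebraMap K L b * ω)
    (hσω : σ ω ≠ ω) : finrank K L = 2 := by
  have hli : LinearIndependent K ![1, ω] := by
    refine LinearIndependent.pair_iff.2 fun s t hst => ?_
    have hσst := congrArg σ hst
    simp only [map_add, map_smul, map_one, map_zero] at hσst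
    simp only [Algebra.smul_def, mul_one] at hst hσst
    have ht : algebraMap K L t = 0 :=
      (mul_eq_zero.1 (by linear_combination hσst - hst)).resolve_right (sub_ne_zero.2 hσω)
    rw [ht, zero_mul, add_zero] at hst
    exact ⟨(map_eq_zero _).1 hst, (map_eq_zero _).1 ht⟩
  have hsp : ⊤ ≤ Submodule.span K (Set.range ![1, ω]) := by
    rintro x -
    obtain ⟨a, b, rfl⟩ := hL x
    rw [Algebra.algebraMap_eq_smul_one, ← Algebra.smul_def]
    exact Submodule.add_mem _ (Submodule.smul_mem _ a (Submodule.subset_span ⟨0, rfl⟩))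
      (Submodule.smul_mem _ b (Submodule.subset_span ⟨1, rfl⟩))
  rw [finrank_eq_card_basis (Basis.mk hli hsp), Fintype.card_fin]

end QuadraticExtension

theorem span_range_eq_top_of_adjoin_eq_top {K M A : Type*} [CommSemiring K] [Monoid M]
    [Semiring A] [Algebra K A] (f : M →* A) (h : Algebra.adjoin K (Set.range f) = ⊤) :
    Submodule.span K (Set.range f) = ⊤ := by
  rw [← MonoidHom.coe_mrange, ← Submonoid.closure_eq (MonoidHom.mrange f), ← Algebra.adjoin_eq_span,
    MonoidHom.coe_mrange, h, Algebra.top_toSubmodule]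

section TwistedConjugation

variable {K L : Type*} [Field K] [Field L] [Algebra K L] {n : Type*} [Fintype n] [DecidableEq n]

noncomputable def twistedConj (σ : L ≃ₐ[K] L) (X : GL n L) : Matrix n n L ≃ₐ[K] Matrix n n L :=
  (AlgEquiv.mapMatrix σ).trans (MulSemiringAction.toAlgEquiv K _ (ConjAct.toConjAct X⁻¹))

variable (σ : L ≃ₐ[K] L) (X : GL n L)

theorem twistedConj_apply (M : Matrix n n L) :
    twistedConj σ X M = ((X⁻¹ : GL n L) : Matrix n n L) * M.map σ * X := by
  simp [twistedConj, ConjAct.units_smul_def]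

theorem twistedConj_smul (c : L) (M : Matrix n n L) :
    twistedConj σ X (c • M) = σ c • twistedConj σ X M := by
  simp only [twistedConj_apply, Matrix.map_smul' _ _ _ (map_mul σ), Matrix.mul_smul,
    Matrix.smul_mul]

variable {G : Type*} [Group G] {α : G ≃* G} {ρ : G →* GL n L} {σ X}

theorem twistedConj_apply_rep (hα : ∀ g, α (α g) = g)
    (hX : ∀ g, (X : Matrix n n L) * ρ g * ((X⁻¹ : GL n L) : Matrix n n L) =
      (ρ (α g) : Matrix n n L).map σ) (g : G) :
    twistedConj σ X (ρ g) = ρ (α g) := by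
  rw [twistedConj_apply, ← hα g, ← hX, hα]
  simp [mul_assoc]

theorem twistedConj_involutive (hα : ∀ g, α (α g) = g)
    (hX : ∀ g, (X : Matrix n n L) * ρ g * ((X⁻¹ : GL n L) : Matrix n n L) =
      (ρ (α g) : Matrix n n L).map σ)
    (hgen : Algebra.adjoin K (Set.range fun g => (ρ g : Matrix n n L)) = ⊤) :
    Function.Involutive (twistedConj σ X) := by
  have h : ((twistedConj σ X).trans (twistedConj σ X)).toAlgHom = AlgHom.id K _ :=
    AlgHom.ext_of_adjoin_eq_top hgen <| by
      rintro _ ⟨g, rfl⟩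
      simp [twistedConj_apply_rep hα hX, hα]
  exact DFunLike.congr_fun h

end TwistedConjugation

section SpanIdeal

variable {L B : Type*} [CommSemiring L] [Semiring B] [Algebra L B] {S I : Set B}

theorem mul_mem_span_of_span_eq_top (hS : Submodule.span L S = ⊤)
    (hSI : ∀ a ∈ S, ∀ x ∈ I, a * x ∈ I) (b : B) {y : B} (hy : y ∈ Submodule.span L I) :
    b * y ∈ Submodule.span L I := by
  have := Submodule.mul_mem_mul (hS ▸ Submodule.mem_top : b ∈ _) hy
  rw [Submodule.span_mul_span] at this
  exact Submodule.span_mono (Set.mul_subset_iff.2 hSI) this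

theorem span_mul_mem_of_span_eq_top (hS : Submodule.span L S = ⊤)
    (hIS : ∀ x ∈ I, ∀ a ∈ S, x * a ∈ I) (b : B) {y : B} (hy : y ∈ Submodule.span L I) :
    y * b ∈ Submodule.span L I := by
  have := Submodule.mul_mem_mul hy (hS ▸ Submodule.mem_top : b ∈ _)
  rw [Submodule.span_mul_span] at this
  exact Submodule.span_mono (Set.mul_subset_iff.2 hIS) this

end SpanIdeal

section SemilinearInvolution

variable {K L B : Type*} [Field K] [Field L] [Algebra K L] [Ring B] [Algebra L B] [Algebra K B]
  {σ : L ≃ₐ[K] L} {θ : B ≃ₐ[K] B} {ω : L}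

theorem mul_mem_eigenspace_one {a b : B} (ha : a ∈ eigenspace θ.toLinearMap 1)
    (hb : b ∈ eigenspace θ.toLinearMap 1) : a * b ∈ eigenspace θ.toLinearMap 1 := by
  simp only [mem_eigenspace_iff, one_smul, AlgEquiv.toLinearMap_apply] at ha hb ⊢
  rw [map_mul, ha, hb]

theorem mem_eigenspace_neg_one_iff_exists_smul (hθσ : ∀ (c : L) (x : B), θ (c • x) = σ c • θ x)
    (hσω : σ ω = -ω) (hω : ω ≠ 0) {x : B} :
    x ∈ eigenspace θ.toLinearMap (-1) ↔ ∃ a ∈ eigenspace θ.toLinearMap 1, x = ω • a := by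
  simp only [mem_eigenspace_iff, one_smul, neg_one_smul, AlgEquiv.toLinearMap_apply]
  constructor
  · intro hx
    refine ⟨ω⁻¹ • x, ?_, by rw [smul_smul, mul_inv_cancel₀ hω, one_smul]⟩
    rw [hθσ, map_inv₀, hσω, hx, inv_neg, neg_smul, smul_neg, neg_neg]
  · rintro ⟨a, ha, rfl⟩
    rw [hθσ, hσω, ha, neg_smul]

theorem span_eigenspace_one_eq_top [NeZero (2 : K)] (hθθ : Function.Involutive θ)
    (hθσ : ∀ (c : L) (x : B), θ (c • x) = σ c • θ x) (hσω : σ ω = -ω) (hω : ω ≠ 0) :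
    Submodule.span L (eigenspace θ.toLinearMap 1 : Set B) = ⊤ := by
  refine eq_top_iff.2 fun x _ => ?_
  have hx : x ∈ eigenspace θ.toLinearMap 1 ⊔ eigenspace θ.toLinearMap (-1) := by
    rw [(isCompl_eigenspace_one_neg_one (θ := θ.toLinearMap) hθθ).sup_eq_top]; trivial
  obtain ⟨a, ha, y, hy, rfl⟩ := Submodule.mem_sup.1 hx
  obtain ⟨b, hb, rfl⟩ := (mem_eigenspace_neg_one_iff_exists_smul hθσ hσω hω).1 hy
  exact add_mem (Submodule.subset_span ha) (Submodule.smul_mem _ ω (Submodule.subset_span hb))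

theorem finrank_eigenspace_one_mul_two [NeZero (2 : K)] [FiniteDimensional K B]
    (hθθ : Function.Involutive θ)
    (hθσ : ∀ (c : L) (x : B), θ (c • x) = σ c • θ x) (hσω : σ ω = -ω) (hω : ω ≠ 0) :
    finrank K (eigenspace θ.toLinearMap 1) * 2 = finrank K B := by
  let e : B ≃ₗ[K] B := DistribMulAction.toLinearEquiv K B (Units.mk0 ω hω)
  have he : (eigenspace θ.toLinearMap 1).map (e : B →ₗ[K] B) =
      eigenspace θ.toLinearMap (-1) := by
    ext x
    rw [mem_eigenspace_neg_one_iff_exists_smul hθσ hσω hω, Submodule.mem_map]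
    simp [e, eq_comm]
  rw [← Submodule.finrank_add_eq_of_isCompl
    (isCompl_eigenspace_one_neg_one (θ := θ.toLinearMap) hθθ), ← he, e.finrank_map_eq, mul_two]

theorem mem_range_algebraMap_of_forall_commute [IsScalarTower K L B] [Algebra.IsCentral L B]
    (hθσ : ∀ (c : L) (x : B), θ (c • x) = σ c • θ x)
    (hσfix : ∀ c : L, σ c = c → c ∈ Set.range (algebraMap K L))
    (hspan : Submodule.span L (eigenspace θ.toLinearMap 1 : Set B) = ⊤) {a : B}
    (ha : a ∈ eigenspace θ.toLinearMap 1)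
    (hcomm : ∀ b ∈ eigenspace θ.toLinearMap 1, a * b = b * a) :
    a ∈ Set.range (algebraMap K B) := by
  have hcentralizer : Submodule.span L (eigenspace θ.toLinearMap 1 : Set B) ≤
      Subalgebra.toSubmodule (Subalgebra.centralizer L {a}) :=
    Submodule.span_le.2 fun b hb => (Subalgebra.mem_centralizer_iff L).2 (by simp [hcomm b hb])
  have hcenter : a ∈ Subalgebra.center L B := Subalgebra.mem_center_iff.2 fun b =>
    ((Subalgebra.mem_centralizer_iff L).1
      (hcentralizer (hspan ▸ Submodule.mem_top : b ∈ _)) a rfl).symm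
  obtain ⟨c, rfl⟩ := Algebra.mem_bot.1 (Algebra.IsCentral.out hcenter)
  rcases subsingleton_or_nontrivial B with hB | hB
  · exact ⟨0, Subsingleton.elim _ _⟩
  rw [mem_eigenspace_iff, one_smul, AlgEquiv.toLinearMap_apply] at ha
  have hσc : σ c = c := (algebraMap L B).injective <| by
    rw [Algebra.algebraMap_eq_smul_one, ← map_one θ, ← hθσ, ← Algebra.algebraMap_eq_smul_one, ha]
  obtain ⟨k, rfl⟩ := hσfix c hσc
  exact ⟨k, IsScalarTower.algebraMap_apply K L B k⟩

theorem add_apply_mem_of_mem_span [IsScalarTower K L B]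
    (hθσ : ∀ (c : L) (x : B), θ (c • x) = σ c • θ x) (hσσ : ∀ c, σ (σ c) = c)
    (hσfix : ∀ c : L, σ c = c → c ∈ Set.range (algebraMap K L)) {I : Submodule K B}
    (hIA : I ≤ eigenspace θ.toLinearMap 1) {y : B} (hy : y ∈ Submodule.span L (I : Set B)) :
    y + θ y ∈ I := by
  let N : Submodule L B :=
    { carrier := {x | ∀ c : L, c • x + θ (c • x) ∈ I}
      add_mem' := fun hx hy c => by
        rw [smul_add, map_add, add_add_add_comm]; exact I.add_mem (hx c) (hy c)
      zero_mem' := fun c => by simp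
      smul_mem' := fun c' x hx c => by rw [smul_smul]; exact hx _ }
  have hIN : Submodule.span L (I : Set B) ≤ N := Submodule.span_le.2 fun x hx c => by
    obtain ⟨k, hk⟩ := hσfix (c + σ c) (by rw [map_add, hσσ, add_comm])
    have hθx : θ x = x := by simpa [mem_eigenspace_iff] using hIA hx
    rw [hθσ, hθx, ← add_smul, ← hk, algebraMap_smul]
    exact I.smul_mem k hx
  simpa using hIN hy 1

theorem eq_bot_or_eq_eigenspace_one [NeZero (2 : K)] [IsScalarTower K L B] [IsSimpleRing B]
    (hθσ : ∀ (c : L) (x : B), θ (c • x) = σ c • θ x) (hσσ : ∀ c, σ (σ c) = c)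
    (hσfix : ∀ c : L, σ c = c → c ∈ Set.range (algebraMap K L))
    (hspan : Submodule.span L (eigenspace θ.toLinearMap 1 : Set B) = ⊤) {I : Submodule K B}
    (hIA : I ≤ eigenspace θ.toLinearMap 1)
    (hI : ∀ a ∈ eigenspace θ.toLinearMap 1, ∀ x ∈ I, a * x ∈ I ∧ x * a ∈ I) :
    I = ⊥ ∨ I = eigenspace θ.toLinearMap 1 := by
  refine or_iff_not_imp_left.2 fun hI0 => ?_
  obtain ⟨x₀, hx₀, hx₀0⟩ := I.ne_bot_iff.1 hI0
  refine le_antisymm hIA fun a ha => ?_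
  have hleft : ∀ a ∈ eigenspace θ.toLinearMap 1, ∀ x ∈ I, a * x ∈ I := fun a ha x hx =>
    (hI a ha x hx).1
  have hright : ∀ x ∈ I, ∀ a ∈ eigenspace θ.toLinearMap 1, x * a ∈ I := fun x hx a ha =>
    (hI a ha x hx).2
  let T := Submodule.span L (I : Set B)
  let J : TwoSidedIdeal B := .mk' T T.zero_mem T.add_mem T.neg_mem
    (mul_mem_span_of_span_eq_top hspan hleft _) (span_mul_mem_of_span_eq_top hspan hright _)
  have h1 : (1 : B) ∈ T := (TwoSidedIdeal.mem_mk' ..).1 <| IsSimpleRing.one_mem_of_ne_zero_mem J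
    hx₀0 ((TwoSidedIdeal.mem_mk' ..).2 (Submodule.subset_span hx₀))
  have h2a : a + θ a ∈ I := add_apply_mem_of_mem_span hθσ hσσ hσfix hIA
    (by simpa using mul_mem_span_of_span_eq_top hspan hleft a h1)
  rw [show a + θ a = (2 : K) • a by simpa [two_smul, mem_eigenspace_iff] using ha] at h2a
  have := I.smul_mem (2 : K)⁻¹ h2a
  rwa [smul_smul, inv_mul_cancel₀ two_ne_zero, one_smul] at this

end SemilinearInvolution

theorem fixed_algebra_central_simple_general
    {K L : Type} [Field K] [CharZero K] [Field L] [Algebra K L]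
    (δ : K)
    (ω : L) (hω : ω ^ 2 = algebraMap K L (-δ))
    (hL : ∀ x : L, ∃ a b : K, x = algebraMap K L a + algebraMap K L b * ω)
    (σ : L ≃ₐ[K] L) (hσne : σ ≠ AlgEquiv.refl) (hσ2 : ∀ x : L, σ (σ x) = x)
    {G : Type} [Group G]
    (α : G ≃* G) (hα : ∀ g : G, α (α g) = g)
    (n : ℕ) (ρ : G →* Matrix.GeneralLinearGroup (Fin n) L)
    (hgen : Algebra.adjoin K
        (Set.range fun g : G => (ρ g : Matrix (Fin n) (Fin n) L)) = ⊤)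
    (hexX : ∃ X : Matrix.GeneralLinearGroup (Fin n) L,
      ∀ g : G, (X : Matrix (Fin n) (Fin n) L) * (ρ g : Matrix (Fin n) (Fin n) L) *
          ((X⁻¹ : Matrix.GeneralLinearGroup (Fin n) L) : Matrix (Fin n) (Fin n) L) =
          ((ρ (α g) : Matrix (Fin n) (Fin n) L)).map σ)
    (A : Submodule K (Matrix (Fin n) (Fin n) L))
    (hA : A = Submodule.span K
      (Set.range fun g : G =>
        (ρ g : Matrix (Fin n) (Fin n) L) + (ρ (α g) : Matrix (Fin n) (Fin n) L)))
    (ωA : Submodule K (Matrix (Fin n) (Fin n) L))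
    (hωA : ∀ x : Matrix (Fin n) (Fin n) L, x ∈ ωA ↔ ∃ a ∈ A, x = ω • a) :
    -- (1) A is a K-subalgebra (closed under multiplication)
    (∀ a ∈ A, ∀ b ∈ A, a * b ∈ A) ∧
    -- (2) M_n(L) = A ⊕ ω·A as K-vector spaces
    (A ⊔ ωA = ⊤ ∧ A ⊓ ωA = ⊥) ∧
    -- (3) dim_K A = n²
    (Module.finrank K A = n ^ 2) ∧
    -- (4) A is central simple over K: its center is K·1 and it has
    --     no two-sided ideals other than 0 and A
    ((1 : Matrix (Fin n) (Fin n) L) ∈ A ∧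
      (∀ a ∈ A, (∀ b ∈ A, a * b = b * a) →
        ∃ c : K, a = algebraMap K L c • (1 : Matrix (Fin n) (Fin n) L)) ∧
      (∀ I : Submodule K (Matrix (Fin n) (Fin n) L), I ≤ A →
        (∀ a ∈ A, ∀ x ∈ I, a * x ∈ I ∧ x * a ∈ I) → I = ⊥ ∨ I = A)) := by
  obtain ⟨X, hX⟩ := hexX
  have hσω_ne : σ ω ≠ ω := σ.apply_ne_self_of_ne_refl hL hσne
  have hσω_neg : σ ω = -ω := σ.apply_eq_neg_of_sq_eq_algebraMap hω hσω_ne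
  have hω0 : ω ≠ 0 := fun h => hσω_ne (by rw [h, map_zero])
  have hσfix (c : L) : σ c = c → c ∈ Set.range (algebraMap K L) :=
    σ.mem_range_algebraMap_of_apply_eq_self hL hσω_ne
  have hθθ := twistedConj_involutive hα hX hgen
  have hθσ := twistedConj_smul σ X
  have hspan := span_eigenspace_one_eq_top hθθ hθσ hσω_neg hω0
  have hcompl := isCompl_eigenspace_one_neg_one (θ := (twistedConj σ X).toLinearMap) hθθ
  obtain rfl : A = eigenspace (twistedConj σ X).toLinearMap 1 := by
    simp_rw [hA, ← twistedConj_apply_rep hα hX]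
    exact span_range_add_eq_eigenspace_one (θ := (twistedConj σ X).toLinearMap) hθθ
      (span_range_eq_top_of_adjoin_eq_top ((Units.coeHom _).comp ρ) hgen)
  obtain rfl : ωA = eigenspace (twistedConj σ X).toLinearMap (-1) := by
    ext x
    rw [hωA, mem_eigenspace_neg_one_iff_exists_smul hθσ hσω_neg hω0]
  refine ⟨fun a ha b hb => mul_mem_eigenspace_one ha hb,
    ⟨hcompl.sup_eq_top, hcompl.inf_eq_bot⟩, ?_, by simp, fun a ha hcomm => ?_, fun I hIA hI => ?_⟩
  · have hL2 := finrank_eq_two_of_apply_ne_self hL hσω_ne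
    have : FiniteDimensional K L := .of_finrank_eq_succ hL2
    have := finrank_eigenspace_one_mul_two hθθ hθσ hσω_neg hω0
    rw [finrank_matrix, Fintype.card_fin, hL2] at this
    linarith
  · obtain ⟨c, rfl⟩ := mem_range_algebraMap_of_forall_commute hθσ hσfix hspan ha hcomm
    exact ⟨c, by rw [Algebra.algebraMap_eq_smul_one, algebraMap_smul]⟩
  · cases isEmpty_or_nonempty (Fin n)
    · exact Or.inl Submodule.eq_bot_of_subsingleton
    · exact eq_bot_or_eq_eigenspace_one hθσ hσ2 hσfix hspan hIA hI

/-- The `α`-fixed algebra `A = span_K {ρ(g) + ρ(α g)}` is a central simple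
`K`-subalgebra of `M_n(L)` of dimension `n²` with `M_n(L) = A ⊕ ω·A`. -/
theorem fixed_algebra_central_simple
    {K L : Type} [Field K] [CharZero K] [Field L] [Algebra K L]
    (δ : K) (hδ : δ ≠ 0) (hδns : ¬ ∃ c : K, c ^ 2 = -δ)
    (ω : L) (hω : ω ^ 2 = algebraMap K L (-δ))
    (hL : ∀ x : L, ∃ a b : K, x = algebraMap K L a + algebraMap K L b * ω)
    (σ : L ≃ₐ[K] L) (hσne : σ ≠ AlgEquiv.refl) (hσ2 : ∀ x : L, σ (σ x) = x)
    {G : Type} [Group G] [Finite G]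
    (α : G ≃* G) (hα : ∀ g : G, α (α g) = g)
    (n : ℕ) (ρ : G →* Matrix.GeneralLinearGroup (Fin n) L)
    (hgen : Algebra.adjoin K
        (Set.range fun g : G => (ρ g : Matrix (Fin n) (Fin n) L)) = ⊤)
    (hexX : ∃ X : Matrix.GeneralLinearGroup (Fin n) L,
      ∀ g : G, (X : Matrix (Fin n) (Fin n) L) * (ρ g : Matrix (Fin n) (Fin n) L) *
          ((X⁻¹ : Matrix.GeneralLinearGroup (Fin n) L) : Matrix (Fin n) (Fin n) L) =
          ((ρ (α g) : Matrix (Fin n) (Fin n) L)).map σ)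
    (A : Submodule K (Matrix (Fin n) (Fin n) L))
    (hA : A = Submodule.span K
      (Set.range fun g : G =>
        (ρ g : Matrix (Fin n) (Fin n) L) + (ρ (α g) : Matrix (Fin n) (Fin n) L)))
    (ωA : Submodule K (Matrix (Fin n) (Fin n) L))
    (hωA : ∀ x : Matrix (Fin n) (Fin n) L, x ∈ ωA ↔ ∃ a ∈ A, x = ω • a) :
    -- (1) A is a K-subalgebra (closed under multiplication)
    (∀ a ∈ A, ∀ b ∈ A, a * b ∈ A) ∧
    -- (2) M_n(L) = A ⊕ ω·A as K-vector spaces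
    (A ⊔ ωA = ⊤ ∧ A ⊓ ωA = ⊥) ∧
    -- (3) dim_K A = n²
    (Module.finrank K A = n ^ 2) ∧
    -- (4) A is central simple over K: its center is K·1 and it has
    --     no two-sided ideals other than 0 and A
    ((1 : Matrix (Fin n) (Fin n) L) ∈ A ∧
      (∀ a ∈ A, (∀ b ∈ A, a * b = b * a) →
        ∃ c : K, a = algebraMap K L c • (1 : Matrix (Fin n) (Fin n) L)) ∧
      (∀ I : Submodule K (Matrix (Fin n) (Fin n) L), I ≤ A →
        (∀ a ∈ A, ∀ x ∈ I, a * x ∈ I ∧ x * a ∈ I) → I = ⊥ ∨ I = A)) :=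
  fixed_algebra_central_simple_general δ ω hω hL σ hσne hσ2 α hα n ρ hgen hexX A hA ωA hωA
end

section
/- Let L be a field of characteristic ≠ 2, σ an automorphism of L of order 2 with fixed field K, G a finite group, α an automorphism of G with α∘α = id, V a finite-dimensional L-vector space, ρ : G → GL_L(V) a representation, and H : V × V → L a map that is additive in both arguments, satisfies H(a·v, w) = a·H(v,w) for all a ∈ L, H(v,w) = σ(H(w,v)), and is G-invariant: H(ρ(g)v, ρ(g)w) = H(v,w) for all g ∈ G. Let A be the K-linear span of {ρ(g) + ρ(α(g)) : g ∈ G} inside End_L(V). Then A is closed under composition (a K-subalgebra), and A is invariant under taking H-adjoints: for every a ∈ A there exists b ∈ A such that H(a(v), w) = H(v, b(w)) for all v, w ∈ V. -/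
/-- The `α`-fixed algebra `A = span_K {ρ(g) + ρ(α g)} ⊆ End_L(V)` is closed
under composition and invariant under taking adjoints with respect to the `G`-invariant
`σ`-Hermitian form `H`. -/
theorem fixed_algebra_adjoint_invariant
    {L K : Type} [Field L] [Field K] [Algebra K L]
    (hchar : (2 : L) ≠ 0)
    (σ : L ≃ₐ[K] L) (hσne : σ ≠ AlgEquiv.refl) (hσ2 : ∀ x : L, σ (σ x) = x)
    (hfix : ∀ x : L, σ x = x → ∃ k : K, algebraMap K L k = x)
    {G : Type} [Group G] [Finite G]
    (α : G ≃* G) (hα : ∀ g : G, α (α g) = g)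
    {V : Type} [AddCommGroup V] [Module L V] [FiniteDimensional L V]
    [Module K V] [IsScalarTower K L V] [SMulCommClass L K V]
    (ρ : G →* (V →ₗ[L] V))
    (H : V → V → L)
    (haddl : ∀ v v' w : V, H (v + v') w = H v w + H v' w)
    (haddr : ∀ v w w' : V, H v (w + w') = H v w + H v w')
    (hsmul : ∀ (a : L) (v w : V), H (a • v) w = a * H v w)
    (hherm : ∀ v w : V, H v w = σ (H w v))
    (hinv : ∀ (g : G) (v w : V), H (ρ g v) (ρ g w) = H v w)
    (A : Submodule K (V →ₗ[L] V))
    (hA : A = Submodule.span K (Set.range fun g : G => ρ g + ρ (α g))) :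
    (∀ a ∈ A, ∀ b ∈ A, a ∘ₗ b ∈ A) ∧
    (∀ a ∈ A, ∃ b ∈ A, ∀ v w : V, H (a v) w = H v (b w)) := by
  subst hA
  set e : G → (V →ₗ[L] V) := fun g => ρ g + ρ (α g) with he
  set A := Submodule.span K (Set.range e) with hAdef
  have hmem : ∀ g, e g ∈ A := fun g => Submodule.subset_span ⟨g, rfl⟩
  -- key multiplication identity
  have hkey : ∀ g h : G, e g ∘ₗ e h = e (g * h) + e (g * α h) := by
    intro g h
    ext x
    simp only [he, LinearMap.comp_apply, LinearMap.add_apply, map_mul α, hα, map_mul ρ,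
      Module.End.mul_apply, map_add]
    abel
  have h0l : ∀ w : V, H 0 w = 0 := by
    intro w
    simpa using hsmul 0 0 w
  have h0r : ∀ v : V, H v 0 = 0 := by
    intro v
    rw [hherm, h0l, map_zero]
  have hsmulr : ∀ (k : K) (v w : V), H v (k • w) = algebraMap K L k * H v w := by
    intro k v w
    rw [hherm, ← algebraMap_smul L k w, hsmul, map_mul, AlgEquiv.commutes, ← hherm]
  have hsmull : ∀ (k : K) (v w : V), H (k • v) w = algebraMap K L k * H v w := by
    intro k v w
    rw [← algebraMap_smul L k v, hsmul]
  constructor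
  · intro a ha b hb
    induction ha using Submodule.span_induction with
    | mem x hx =>
      obtain ⟨g, rfl⟩ := hx
      induction hb using Submodule.span_induction with
      | mem y hy =>
        obtain ⟨h, rfl⟩ := hy
        rw [show (fun g : G => ρ g + ρ (α g)) = e from rfl] at *
        rw [hkey]
        exact A.add_mem (hmem _) (hmem _)
      | zero => simpa using A.zero_mem
      | add y z _ _ hy hz =>
        have : e g ∘ₗ (y + z) = e g ∘ₗ y + e g ∘ₗ z := by ext x; simp
        rw [this]; exact A.add_mem hy hz
      | smul k y _ hy =>
        have : e g ∘ₗ (k • y) = k • (e g ∘ₗ y) := by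
          ext x
          simp only [LinearMap.comp_apply, LinearMap.smul_apply, ← algebraMap_smul L k, map_smul]
        rw [this]; exact A.smul_mem k hy
    | zero => simpa using A.zero_mem
    | add x y _ _ hx hy =>
      have : (x + y) ∘ₗ b = x ∘ₗ b + y ∘ₗ b := by ext v; simp
      rw [this]; exact A.add_mem hx hy
    | smul k x _ hx =>
      have : (k • x) ∘ₗ b = k • (x ∘ₗ b) := by ext v; simp
      rw [this]; exact A.smul_mem k hx
  · intro a ha
    induction ha using Submodule.span_induction with
    | mem x hx =>
      obtain ⟨g, rfl⟩ := hx
      refine ⟨e g⁻¹, hmem _, fun v w => ?_⟩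
      have hadj : ∀ h : G, ∀ v w : V, H (ρ h v) w = H v (ρ h⁻¹ w) := by
        intro h v w
        have : w = ρ h (ρ h⁻¹ w) := by
          rw [← Module.End.mul_apply, ← map_mul, mul_inv_cancel, map_one, Module.End.one_apply]
        conv_lhs => rw [this, hinv]
      show H ((ρ g + ρ (α g)) v) w = H v (e g⁻¹ w)
      simp only [he, LinearMap.add_apply, map_inv α]
      rw [haddl, haddr, hadj g, hadj (α g)]
    | zero =>
      exact ⟨0, A.zero_mem, fun v w => by simp [h0l, h0r]⟩
    | add x y _ _ hx hy =>
      obtain ⟨b, hb, hbx⟩ := hx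
      obtain ⟨c, hc, hcy⟩ := hy
      refine ⟨b + c, A.add_mem hb hc, fun v w => ?_⟩
      simp only [LinearMap.add_apply]
      rw [haddl, haddr, hbx, hcy]
    | smul k x _ hx =>
      obtain ⟨b, hb, hbx⟩ := hx
      refine ⟨k • b, A.smul_mem k hb, fun v w => ?_⟩
      simp only [LinearMap.smul_apply]
      rw [hsmull, hsmulr, hbx]
end

section
/- Let K be a totally real number field, L a totally imaginary quadratic extension of K with nontrivial K-automorphism σ, and let (V,H) and (V',H') be L/K-Hermitian spaces of L-dimension n. Regard V as a 2n-dimensional K-vector space V_K and define the quadratic form Q_H : V_K → K by Q_H(v) = H(v,v) (which lies in K since it is fixed by σ), and similarly Q_{H'}. Then: (1) (V,H) and (V',H') are isometric as Hermitian spaces if and only if (V_K, Q_H) and (V'_K, Q_{H'}) are isometric as quadratic spaces over K; (2) if L = K(√δ) for δ ∈ K^×, then the discriminant of Q_H, i.e. the class of (−1)^n·det(Gram matrix of the polar bilinear form of Q_H with respect to a K-basis of V_K) in K^×/(K^×)², equals the class of δ^n. -/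
/-!
Write `B w v = H v w` and take `s` with `L = K(s)` and `s ^ 2 = δ`, so that `σ s = -s`. The polar
form of `Q_H` is the trace form `(x, y) ↦ (B x y + B y x) / 2`, and `B v w = 0` iff `w` is
trace-orthogonal to both `v` and `s • v`.

(1) (Jacobson) Given a `K`-isometry `g` and an anisotropic `v`, composing `g` with reflections
of the trace form (which are only `K`-linear) gives a `K`-isometry `G` with
`G (s • v) = s • G v`. Such a `G` maps the `B`-orthogonal of `v` onto that of `G v`. By induction
on the dimension, `V` and `V'` then have orthogonal `L`-bases with equal norms, and the
`L`-linear map matching these bases is an isometry.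

(2) On the `K`-basis `(e j, s • e j)` built from an orthogonal `L`-basis `e`, the polar form is
diagonal with entries `Q (e j)` and `-δ Q (e j)`. Its determinant is therefore `(-δ) ^ n` times
a square, and a change of basis multiplies the determinant by a square.
-/

open Module
open scoped Kronecker

section Hermitian

variable {L V V₁ V₂ : Type*} [Field L] {σ : L →+* L}
  [AddCommGroup V] [Module L V] [AddCommGroup V₁] [Module L V₁] [AddCommGroup V₂] [Module L V₂]
  {B : V →ₛₗ[σ] V →ₗ[L] L} {B₁ : V₁ →ₛₗ[σ] V₁ →ₗ[L] L} {B₂ : V₂ →ₛₗ[σ] V₂ →ₗ[L] L}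

/-- Mathlib's sesquilinear forms are semilinear in the first argument, hence the swap
`(w, v) ↦ H v w`. -/
def hermitianForm (H : V → V → L) (haddl : ∀ v v' w, H (v + v') w = H v w + H v' w)
    (hsmul : ∀ (a : L) v w, H (a • v) w = a * H v w) (hherm : ∀ v w, H v w = σ (H w v)) :
    V →ₛₗ[σ] V →ₗ[L] L :=
  LinearMap.mk₂'ₛₗ σ (RingHom.id L) (fun w v => H v w)
    (fun w w' v => by simp only [hherm v, haddl, map_add])
    (fun a w v => by simp only [hherm v, hsmul, map_mul, smul_eq_mul])
    (fun w v v' => haddl v v' w)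
    (fun a w v => hsmul a v w)

theorem isSymm_hermitianForm (H : V → V → L) {haddl hsmul}
    (hherm : ∀ v w, H v w = σ (H w v)) : (hermitianForm H haddl hsmul hherm).IsSymm :=
  LinearMap.isSymm_def.mpr fun w v => (hherm w v).symm

theorem eq_zero_of_forall_apply_self_eq_zero {a : L} (ha : σ a ≠ a)
    (h : ∀ x, B x x = 0) : B = 0 := by
  have hanti : ∀ x y, B x y + B y x = 0 := fun x y => by
    simpa [h] using h (x + y)
  ext x y
  have hxy := hanti (a • x) y
  rw [LinearMap.map_smulₛₗ₂, map_smul, smul_eq_mul, smul_eq_mul,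
    eq_neg_of_add_eq_zero_left (hanti y x)] at hxy
  rw [LinearMap.zero_apply, LinearMap.zero_apply]
  exact (mul_eq_zero.mp (by linear_combination hxy : (σ a - a) * B x y = 0)).resolve_left
    (sub_ne_zero.mpr ha)

theorem LinearMap.IsSymm.apply_eq_zero_iff (hB : B.IsSymm) {s : L} (hs : σ s = -s)
    (hs₀ : s ≠ 0) (h2 : (2 : L) ≠ 0) (v w : V) :
    B v w = 0 ↔ B v w + B w v = 0 ∧ B (s • v) w + B w (s • v) = 0 := by
  rw [← hB.eq v w, LinearMap.map_smulₛₗ₂, map_smul, ← hB.eq v w, hs, smul_eq_mul, smul_eq_mul]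
  refine ⟨fun h => by simp [h], fun ⟨h₁, h₂⟩ => ?_⟩
  have : s * 2 * B v w = 0 := by linear_combination s * h₁ - h₂
  simpa [hs₀, h2] using this

theorem apply_smul_smul_of_map_eq_neg {s : L} (hs : σ s = -s) (w : V) :
    B (s • w) (s • w) = -s ^ 2 * B w w := by
  simp only [LinearMap.map_smulₛₗ₂, map_smul, hs, smul_eq_mul]
  ring

theorem apply_smul_add_apply_smul_of_map_eq_neg {s : L} (hs : σ s = -s) (w : V) :
    B (s • w) w + B w (s • w) = 0 := by
  simp only [LinearMap.map_smulₛₗ₂, map_smul, hs, smul_eq_mul]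
  ring

theorem apply_sub_smul_self {c : L} (hc : σ c = c) (x d : V) :
    B (x - c • d) (x - c • d) = B x x - c * (B d x + B x d) + c ^ 2 * B d d := by
  simp only [map_sub, map_smul, LinearMap.map_smulₛₗ₂, LinearMap.sub_apply, smul_eq_mul, hc]
  ring

theorem apply_add_apply_eq_of_forall_apply_self {F : Type*} [FunLike F V₁ V₂]
    [AddHomClass F V₁ V₂] {G : F} (hG : ∀ x, B₂ (G x) (G x) = B₁ x x) (x y : V₁) :
    B₂ (G x) (G y) + B₂ (G y) (G x) = B₁ x y + B₁ y x := by
  have h := hG (x + y)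
  simp only [map_add, LinearMap.add_apply, hG] at h
  linear_combination h

noncomputable def Module.Basis.mkFinConsKer {n : ℕ} (f : V →ₗ[L] L) {v : V} (hv : f v ≠ 0)
    (b : Basis (Fin n) L (LinearMap.ker f)) : Basis (Fin (n + 1)) L V :=
  Basis.mkFinCons v b
    (fun c x hx hc => by
      have h := congrArg f hc
      rw [map_add, map_smul, LinearMap.mem_ker.mp hx, smul_eq_mul, add_zero, map_zero] at h
      exact (mul_eq_zero.mp h).resolve_right hv)
    (fun z => ⟨-(f z / f v), by simp [div_mul_cancel₀ _ hv]⟩)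

theorem Module.Basis.coe_mkFinConsKer {n : ℕ} (f : V →ₗ[L] L) {v : V} (hv : f v ≠ 0)
    (b : Basis (Fin n) L (LinearMap.ker f)) :
    ⇑(Basis.mkFinConsKer f hv b) = Fin.cons v ((↑) ∘ b) :=
  Basis.coe_mkFinCons _ _ _ _

theorem LinearMap.IsSymm.isOrthoᵢ_mkFinConsKer (hB : B.IsSymm) {n : ℕ} {v : V}
    (hv : B v v ≠ 0) {b : Basis (Fin n) L (LinearMap.ker (B v))}
    (hb : (B.domRestrict₁₂ (LinearMap.ker (B v)) (LinearMap.ker (B v))).IsOrthoᵢ b) :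
    B.IsOrthoᵢ (Basis.mkFinConsKer (B v) hv b) := by
  rw [Basis.coe_mkFinConsKer]
  intro i j hij
  induction i using Fin.cases <;> induction j using Fin.cases <;>
    simp only [Function.onFun, Fin.cons_zero, Fin.cons_succ, Function.comp_apply]
  · exact absurd rfl hij
  · exact (b _).2
  · rw [← hB.eq v, LinearMap.mem_ker.mp (b _).2, map_zero]
  · exact hb (ne_of_apply_ne _ hij)

theorem apply_basis_equiv_apply {ι : Type*} {e₁ : Basis ι L V₁} {e₂ : Basis ι L V₂}
    (h₁ : B₁.IsOrthoᵢ e₁) (h₂ : B₂.IsOrthoᵢ e₂) (h : ∀ i, B₂ (e₂ i) (e₂ i) = B₁ (e₁ i) (e₁ i))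
    (x y : V₁) :
    B₂ (e₁.equiv e₂ (Equiv.refl ι) x) (e₁.equiv e₂ (Equiv.refl ι) y) = B₁ x y := by
  let f : V₁ →ₗ[L] V₂ := e₁.equiv e₂ (Equiv.refl ι)
  have hf : (B₂.comp f).compl₂ f = B₁ := LinearMap.ext_basis e₁ e₁ fun i j => by
    obtain rfl | hij := eq_or_ne i j
    · simpa [f] using h i
    · simp [f, h₁ hij, h₂ hij]
  exact LinearMap.congr_fun₂ hf x y

end Hermitian

section Reflection

variable {K L V : Type*} [Field K] [Field L] [Algebra K L] {σ : L ≃ₐ[K] L}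
  [AddCommGroup V] [Module L V] [Module K V] [IsScalarTower K L V]
  {B : V →ₛₗ[(σ : L →+* L)] V →ₗ[L] L}

theorem apply_smul_of_tower_left (k : K) (x y : V) :
    B (k • x) y = algebraMap K L k * B x y := by
  rw [← algebraMap_smul L k x, LinearMap.map_smulₛₗ₂, RingHom.coe_coe, AlgEquiv.commutes,
    smul_eq_mul]

theorem apply_smul_of_tower_right (k : K) (x y : V) :
    B x (k • y) = algebraMap K L k * B x y := by
  rw [← algebraMap_smul L k y, map_smul, smul_eq_mul]

variable (B) in
/-- The coefficient of the reflection in `d` for the trace form `(x, y) ↦ B x y + B y x`.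
If `B d d = 0` it is `0` (division by zero), and the reflection is the identity. -/
def reflectionCoeff (d : V) : V →ₗ[K] L where
  toFun x := (B d x + B x d) / B d d
  map_add' x y := by simp only [map_add, LinearMap.add_apply]; ring
  map_smul' k x := by
    simp only [apply_smul_of_tower_left, apply_smul_of_tower_right, RingHom.id_apply,
      Algebra.smul_def]
    ring

theorem reflectionCoeff_apply (d x : V) :
    reflectionCoeff B d x = (B d x + B x d) / B d d := rfl

theorem LinearMap.IsSymm.map_reflectionCoeff (hB : B.IsSymm) (d x : V) :
    σ (reflectionCoeff B d x) = reflectionCoeff B d x := by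
  have h := hB.eq
  simp only [RingHom.coe_coe] at h
  rw [reflectionCoeff_apply, map_div₀, map_add, h, h, h, add_comm]

theorem reflectionCoeff_smul_self {d : V} (hd : B d d ≠ 0) {c : L} (hc : σ c = c) :
    reflectionCoeff B d (c • d) = 2 * c := by
  simp only [reflectionCoeff_apply, map_smul, LinearMap.map_smulₛₗ₂, RingHom.coe_coe, hc,
    smul_eq_mul]
  field_simp
  ring

theorem LinearMap.IsSymm.reflectionCoeff_sub_smul (hB : B.IsSymm) (d x : V) :
    reflectionCoeff B d (x - reflectionCoeff B d x • d) = -reflectionCoeff B d x := by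
  by_cases hd : B d d = 0
  · simp [reflectionCoeff_apply, hd]
  rw [map_sub, reflectionCoeff_smul_self hd (hB.map_reflectionCoeff d x)]
  ring

def LinearMap.IsSymm.reflection (hB : B.IsSymm) (d : V) : V ≃ₗ[K] V :=
  LinearEquiv.ofInvolutive (LinearMap.id - (reflectionCoeff B d).smulRight d) fun x => by
    have h := hB.reflectionCoeff_sub_smul d x
    simp only [LinearMap.sub_apply, LinearMap.id_apply, LinearMap.smulRight_apply] at h ⊢
    rw [h]
    module

theorem LinearMap.IsSymm.reflection_apply (hB : B.IsSymm) (d x : V) :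
    hB.reflection d x = x - ((B d x + B x d) / B d d) • d := rfl

theorem LinearMap.IsSymm.apply_reflection_reflection (hB : B.IsSymm) (d x : V) :
    B (hB.reflection d x) (hB.reflection d x) = B x x := by
  by_cases hd : B d d = 0
  · simp [hB.reflection_apply, hd]
  have h := apply_sub_smul_self (B := B) (hB.map_reflectionCoeff d x) x d
  rw [reflectionCoeff_apply] at h
  rw [hB.reflection_apply, h]
  field_simp
  ring

theorem LinearMap.IsSymm.reflection_apply_of_add_eq_zero (hB : B.IsSymm) {d x : V}
    (h : B d x + B x d = 0) : hB.reflection d x = x := by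
  simp [hB.reflection_apply, h]

theorem LinearMap.IsSymm.reflection_apply_self (hB : B.IsSymm) {d : V} (hd : B d d ≠ 0) :
    hB.reflection d d = -d := by
  rw [hB.reflection_apply, ← two_mul, mul_div_cancel_right₀ _ hd]
  module

theorem LinearMap.IsSymm.reflection_sub_apply_left (hB : B.IsSymm) {y z : V}
    (h : B y y = B z z) (hyz : B (y - z) (y - z) ≠ 0) : hB.reflection (y - z) y = z := by
  have hc : B (y - z) y + B y (y - z) = B (y - z) (y - z) := by
    simp only [map_sub, LinearMap.sub_apply, h]
    ring
  rw [hB.reflection_apply, hc, div_self hyz, one_smul, sub_sub_cancel]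

/-- One reflection in `y - z` or, if `y - z` is isotropic, reflections in `y + z` and then
in `z`. -/
theorem LinearMap.IsSymm.exists_fixing_isometry_apply_eq (hB : B.IsSymm) (h2 : (2 : L) ≠ 0)
    {u y z : V} (hyz : B y y = B z z) (hz : B z z ≠ 0) (hyu : B y u + B u y = 0)
    (hzu : B z u + B u z = 0) :
    ∃ e : V ≃ₗ[K] V, (∀ x, B (e x) (e x) = B x x) ∧ e y = z ∧ e u = u := by
  have hsum : B (y - z) (y - z) + B (y - -z) (y - -z) = 4 * B z z := by
    simp only [map_sub, map_neg, LinearMap.sub_apply, LinearMap.neg_apply, hyz]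
    ring
  by_cases hm : B (y - z) (y - z) = 0
  · have hp : B (y - -z) (y - -z) ≠ 0 := by
      rw [hm, zero_add] at hsum
      rw [hsum]
      exact mul_ne_zero (by simpa [show (4 : L) = 2 * 2 by norm_num] using h2) hz
    refine ⟨(hB.reflection (y - -z)).trans (hB.reflection z), fun x => ?_, ?_, ?_⟩
    · simp only [LinearEquiv.trans_apply, hB.apply_reflection_reflection]
    · rw [LinearEquiv.trans_apply, hB.reflection_sub_apply_left (by simp [hyz]) hp, map_neg,
        hB.reflection_apply_self hz, neg_neg]
    · have hu : B (y - -z) u + B u (y - -z) = 0 := by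
        simp only [map_sub, map_neg, LinearMap.sub_apply, LinearMap.neg_apply]
        linear_combination hyu + hzu
      rw [LinearEquiv.trans_apply, hB.reflection_apply_of_add_eq_zero hu,
        hB.reflection_apply_of_add_eq_zero hzu]
  · refine ⟨hB.reflection (y - z), hB.apply_reflection_reflection _,
      hB.reflection_sub_apply_left hyz hm, hB.reflection_apply_of_add_eq_zero ?_⟩
    simp only [map_sub, LinearMap.sub_apply]
    linear_combination hyu - hzu

end Reflection

section Jacobson

variable {K L V₁ V₂ : Type*} [Field K] [Field L] [Algebra K L] {σ : L ≃ₐ[K] L}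
  [AddCommGroup V₁] [Module L V₁] [Module K V₁] [IsScalarTower K L V₁]
  [AddCommGroup V₂] [Module L V₂] [Module K V₂] [IsScalarTower K L V₂]
  {B₁ : V₁ →ₛₗ[(σ : L →+* L)] V₁ →ₗ[L] L} {B₂ : V₂ →ₛₗ[(σ : L →+* L)] V₂ →ₗ[L] L} {s : L}

omit [IsScalarTower K L V₁] in
/-- Correct `g` by an isometry of `V₂` that fixes `g v` and moves `g (s • v)` to `s • g v`. -/
theorem exists_isometry_apply_smul_eq (hB₂ : B₂.IsSymm) (hs : σ s = -s) (hs₀ : s ≠ 0)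
    (h2 : (2 : L) ≠ 0) (g : V₁ ≃ₗ[K] V₂) (hg : ∀ x, B₂ (g x) (g x) = B₁ x x) {v : V₁}
    (hv : B₁ v v ≠ 0) :
    ∃ G : V₁ ≃ₗ[K] V₂, (∀ x, B₂ (G x) (G x) = B₁ x x) ∧ G (s • v) = s • G v := by
  obtain ⟨e, he, hey, heu⟩ := hB₂.exists_fixing_isometry_apply_eq h2 (u := g v)
    (y := g (s • v)) (z := s • g v)
    (by rw [hg, apply_smul_smul_of_map_eq_neg hs, apply_smul_smul_of_map_eq_neg hs, hg])
    (by rw [apply_smul_smul_of_map_eq_neg hs, hg]; exact mul_ne_zero (by simpa using hs₀) hv)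
    (by rw [apply_add_apply_eq_of_forall_apply_self hg,
      apply_smul_add_apply_smul_of_map_eq_neg hs])
    (apply_smul_add_apply_smul_of_map_eq_neg hs _)
  exact ⟨g.trans e, fun x => by simp [he, hg], by simp [hey, heu]⟩

theorem map_ker_eq_ker_of_apply_smul_eq (hB₁ : B₁.IsSymm) (hB₂ : B₂.IsSymm) (hs : σ s = -s)
    (hs₀ : s ≠ 0) (h2 : (2 : L) ≠ 0) {G : V₁ ≃ₗ[K] V₂} (hG : ∀ x, B₂ (G x) (G x) = B₁ x x)
    {v : V₁} (hGs : G (s • v) = s • G v) :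
    ((LinearMap.ker (B₁ v)).restrictScalars K).map (G : V₁ →ₗ[K] V₂) =
      (LinearMap.ker (B₂ (G v))).restrictScalars K := by
  have key : ∀ w, B₂ (G v) (G w) = 0 ↔ B₁ v w = 0 := fun w => by
    rw [hB₂.apply_eq_zero_iff hs hs₀ h2, hB₁.apply_eq_zero_iff hs hs₀ h2, ← hGs,
      apply_add_apply_eq_of_forall_apply_self hG, apply_add_apply_eq_of_forall_apply_self hG]
  ext w
  simp only [Submodule.mem_map, Submodule.restrictScalars_mem, LinearMap.mem_ker,
    LinearEquiv.coe_coe]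
  constructor
  · rintro ⟨x, hx, rfl⟩
    exact (key x).mpr hx
  · intro hw
    exact ⟨G.symm w, (key _).mp (by simpa using hw), by simp⟩

theorem exists_isOrthoᵢ_bases_of_isometry [FiniteDimensional L V₁] [FiniteDimensional L V₂]
    (hB₁ : B₁.IsSymm) (hB₂ : B₂.IsSymm) (hs : σ s = -s) (hs₀ : s ≠ 0) (h2 : (2 : L) ≠ 0)
    {n : ℕ} (h₁ : finrank L V₁ = n) (h₂ : finrank L V₂ = n) (g : V₁ ≃ₗ[K] V₂)
    (hg : ∀ x, B₂ (g x) (g x) = B₁ x x) :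
    ∃ (e₁ : Basis (Fin n) L V₁) (e₂ : Basis (Fin n) L V₂), B₁.IsOrthoᵢ e₁ ∧ B₂.IsOrthoᵢ e₂ ∧
      ∀ i, B₂ (e₂ i) (e₂ i) = B₁ (e₁ i) (e₁ i) := by
  induction n generalizing V₁ V₂ with
  | zero =>
    exact ⟨basisOfFinrankZero h₁, basisOfFinrankZero h₂, fun i => i.elim0, fun i => i.elim0,
      fun i => i.elim0⟩
  | succ n ih =>
    by_cases hB₁0 : ∀ v, B₁ v v = 0
    · have hσs : σ s ≠ s := by
        rw [hs]
        intro h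
        exact mul_ne_zero h2 hs₀ (by linear_combination -h)
      have h₁0 := eq_zero_of_forall_apply_self_eq_zero hσs hB₁0
      have h₂0 := eq_zero_of_forall_apply_self_eq_zero hσs fun y => by
        simpa [hB₁0] using hg (g.symm y)
      exact ⟨finBasisOfFinrankEq L V₁ h₁, finBasisOfFinrankEq L V₂ h₂,
        fun i j _ => by simp [h₁0, Function.onFun], fun i j _ => by simp [h₂0, Function.onFun],
        fun i => by simp [h₁0, h₂0]⟩
    push Not at hB₁0
    obtain ⟨v, hv⟩ := hB₁0
    obtain ⟨G, hG, hGs⟩ := exists_isometry_apply_smul_eq hB₂ hs hs₀ h2 g hg hv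
    have hGv : B₂ (G v) (G v) ≠ 0 := by rwa [hG]
    have hW₁ := Dual.finrank_ker_add_one_of_ne_zero (f := B₁ v) fun h => hv (by simp [h])
    have hW₂ := Dual.finrank_ker_add_one_of_ne_zero (f := B₂ (G v)) fun h => hGv (by simp [h])
    let G' : LinearMap.ker (B₁ v) ≃ₗ[K] LinearMap.ker (B₂ (G v)) :=
      G.ofSubmodules _ _ (map_ker_eq_ker_of_apply_smul_eq hB₁ hB₂ hs hs₀ h2 hG hGs)
    obtain ⟨e₁, e₂, he₁, he₂, he⟩ :=
      ih (hB₁.domRestrict _) (hB₂.domRestrict _) (by omega) (by omega) G' fun x => hG x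
    refine ⟨Basis.mkFinConsKer (B₁ v) hv e₁, Basis.mkFinConsKer (B₂ (G v)) hGv e₂,
      hB₁.isOrthoᵢ_mkFinConsKer hv he₁, hB₂.isOrthoᵢ_mkFinConsKer hGv he₂, fun i => ?_⟩
    rw [Basis.coe_mkFinConsKer, Basis.coe_mkFinConsKer]
    induction i using Fin.cases
    · simp [hG]
    · exact he _

theorem exists_linearEquiv_isometry_of_isometry [FiniteDimensional L V₁]
    [FiniteDimensional L V₂] (hB₁ : B₁.IsSymm) (hB₂ : B₂.IsSymm) (hs : σ s = -s) (hs₀ : s ≠ 0)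
    (h2 : (2 : L) ≠ 0) (h : finrank L V₁ = finrank L V₂) (g : V₁ ≃ₗ[K] V₂)
    (hg : ∀ x, B₂ (g x) (g x) = B₁ x x) :
    ∃ f : V₁ ≃ₗ[L] V₂, ∀ x y, B₂ (f x) (f y) = B₁ x y := by
  obtain ⟨e₁, e₂, he₁, he₂, he⟩ :=
    exists_isOrthoᵢ_bases_of_isometry hB₁ hB₂ hs hs₀ h2 rfl h.symm g hg
  exact ⟨e₁.equiv e₂ (Equiv.refl _), apply_basis_equiv_apply he₁ he₂ he⟩

end Jacobson

section Discriminant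

theorem LinearMap.det_toMatrix₂_eq_mul_sq {R M ι κ : Type*} [CommRing R] [AddCommGroup M]
    [Module R M] [Fintype ι] [DecidableEq ι] [Fintype κ] [DecidableEq κ]
    (B : LinearMap.BilinForm R M) (b : Basis ι R M) (c : Basis κ R M) (e : κ ≃ ι) :
    (LinearMap.toMatrix₂ b b B).det =
      (LinearMap.toMatrix₂ c c B).det * ((c.reindex e).toMatrix b).det ^ 2 := by
  have hc : LinearMap.toMatrix₂ (c.reindex e) (c.reindex e) B =
      (LinearMap.toMatrix₂ c c B).submatrix e.symm e.symm := by
    ext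
    simp [LinearMap.toMatrix₂_apply]
  rw [← LinearMap.toMatrix₂_mul_basis_toMatrix (c.reindex e) (c.reindex e), Matrix.det_mul,
    Matrix.det_mul, Matrix.det_transpose, hc, Matrix.det_submatrix_equiv_self]
  ring

variable {K L V : Type*} [Field K] [Field L] [Algebra K L] {σ : L ≃ₐ[K] L}
  [AddCommGroup V] [Module L V] {B : V →ₛₗ[(σ : L →+* L)] V →ₗ[L] L} {Q : V → K}

theorem algebraMap_polar (hQ : ∀ v, algebraMap K L (Q v) = B v v) (x y : V) :
    algebraMap K L ((Q (x + y) - Q x - Q y) / 2) = (B x y + B y x) / 2 := by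
  rw [map_div₀, map_sub, map_sub, hQ, hQ, hQ, map_ofNat]
  simp only [map_add, LinearMap.add_apply]
  ring

variable [Module K V] [IsScalarTower K L V]

def polarForm (hQ : ∀ v, algebraMap K L (Q v) = B v v) : LinearMap.BilinForm K V :=
  LinearMap.mk₂ K (fun x y => (Q (x + y) - Q x - Q y) / 2)
    (fun x x' y => (algebraMap K L).injective <| by
      simp only [map_add, algebraMap_polar hQ, LinearMap.add_apply]
      ring)
    (fun c x y => (algebraMap K L).injective <| by
      simp only [smul_eq_mul, map_mul, algebraMap_polar hQ, apply_smul_of_tower_left,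
        apply_smul_of_tower_right]
      ring)
    (fun x y y' => (algebraMap K L).injective <| by
      simp only [map_add, algebraMap_polar hQ, LinearMap.add_apply]
      ring)
    (fun c x y => (algebraMap K L).injective <| by
      simp only [smul_eq_mul, map_mul, algebraMap_polar hQ, apply_smul_of_tower_left,
        apply_smul_of_tower_right]
      ring)

theorem toMatrix₂_polarForm (hQ : ∀ v, algebraMap K L (Q v) = B v v) {ι : Type*} [Fintype ι]
    [DecidableEq ι] (b : Basis ι K V) :
    LinearMap.toMatrix₂ b b (polarForm hQ) =
      Matrix.of fun i j => (Q (b i + b j) - Q (b i) - Q (b j)) / 2 := by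
  ext i j
  rw [LinearMap.toMatrix₂_apply]
  rfl

theorem algebraMap_diagonal_eq_of_sq_eq {s : L} {δ : K} (hσs : σ s = -s)
    (hs : s ^ 2 = algebraMap K L δ) (h2 : (2 : L) ≠ 0) (i k : Fin 2) :
    algebraMap K L (Matrix.diagonal ![1, -δ] i k) =
      (σ (![1, s] i) * ![1, s] k + σ (![1, s] k) * ![1, s] i) / 2 := by
  fin_cases i <;> fin_cases k <;> field_simp <;> simp [hσs, ← hs] <;> ring

theorem toMatrix₂_smulTower_polarForm {ι κ : Type*} [Fintype ι] [DecidableEq ι] [Fintype κ]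
    [DecidableEq κ] (hQ : ∀ v, algebraMap K L (Q v) = B v v) (b : Basis ι K L)
    {e : Basis κ L V} (he : B.IsOrthoᵢ e) {W : Matrix ι ι K}
    (hW : ∀ i k, algebraMap K L (W i k) = (σ (b i) * b k + σ (b k) * b i) / 2) :
    LinearMap.toMatrix₂ (b.smulTower e) (b.smulTower e) (polarForm hQ) =
      W ⊗ₖ Matrix.diagonal fun j => Q (e j) := by
  ext ⟨i, j⟩ ⟨k, l⟩
  apply (algebraMap K L).injective
  rw [LinearMap.toMatrix₂_apply, Basis.smulTower_apply, Basis.smulTower_apply, polarForm,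
    LinearMap.mk₂_apply, algebraMap_polar hQ, Matrix.kronecker_apply, map_mul, hW,
    Matrix.diagonal_apply]
  simp only [LinearMap.map_smulₛₗ₂, map_smul, RingHom.coe_coe, smul_eq_mul]
  obtain rfl | hjl := eq_or_ne j l
  · rw [if_pos rfl, hQ]
    ring
  · rw [if_neg hjl, (he hjl : B (e j) (e l) = 0), (he hjl.symm : B (e l) (e j) = 0), map_zero]
    ring

theorem exists_neg_one_pow_mul_det_polarForm_eq {n : ℕ} {δ : K}
    (hQ : ∀ v, algebraMap K L (Q v) = B v v) (hB : B.SeparatingRight) (bL : Basis (Fin 2) K L)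
    (hbL : ∀ i k, algebraMap K L (Matrix.diagonal ![1, -δ] i k) =
      (σ (bL i) * bL k + σ (bL k) * bL i) / 2)
    {e : Basis (Fin n) L V} (he : B.IsOrthoᵢ e) (b : Basis (Fin (2 * n)) K V) :
    ∃ c : K, c ≠ 0 ∧
      (-1) ^ n * (LinearMap.toMatrix₂ b b (polarForm hQ)).det = δ ^ n * c ^ 2 := by
  have hQe : ∀ j, Q (e j) ≠ 0 := fun j h =>
    he.not_isOrtho_basis_self_of_separatingRight hB j (by rw [← hQ, h, map_zero])
  set P := ((bL.smulTower e).reindex finProdFinEquiv).toMatrix b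
  refine ⟨(∏ j, Q (e j)) * P.det, mul_ne_zero (Finset.prod_ne_zero_iff.mpr fun j _ => hQe j)
    ((Basis.isUnit_det _ _).ne_zero), ?_⟩
  rw [LinearMap.det_toMatrix₂_eq_mul_sq _ b (bL.smulTower e) finProdFinEquiv,
    toMatrix₂_smulTower_polarForm hQ bL he hbL, Matrix.det_kronecker, Matrix.det_diagonal,
    Matrix.det_diagonal, Fin.prod_univ_two]
  simp only [Matrix.cons_val_zero, Matrix.cons_val_one, Fintype.card_fin, one_mul, neg_pow δ]
  have h1 : ((-1 : K) ^ n) ^ 2 = 1 := by rw [← pow_mul, pow_mul', neg_one_sq, one_pow]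
  linear_combination (δ ^ n * ((∏ j, Q (e j)) * P.det) ^ 2) * h1

end Discriminant

theorem AlgEquiv.apply_eq_neg_of_sq_eq {K L : Type*} [Field K] [Field L] [Algebra K L]
    {σ : L ≃ₐ[K] L} (hσ : σ ≠ AlgEquiv.refl) {s : L} {δ : K}
    (hgen : ∀ x : L, ∃ a b : K, x = algebraMap K L a + algebraMap K L b * s)
    (hs : s ^ 2 = algebraMap K L δ) : σ s = -s ∧ σ s ≠ s := by
  have hne : σ s ≠ s := fun h => hσ <| AlgEquiv.ext fun x => by
    obtain ⟨a, b, rfl⟩ := hgen x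
    simp [h]
  refine ⟨(sq_eq_sq_iff_eq_or_eq_neg.mp ?_).resolve_left hne, hne⟩
  rw [← map_pow, hs, AlgEquiv.commutes]

theorem exists_basis_coe_eq_of_forall_eq_add_mul {K L : Type*} [Field K] [Field L]
    [Algebra K L] (hquad : finrank K L = 2) {s : L}
    (hgen : ∀ x : L, ∃ a b : K, x = algebraMap K L a + algebraMap K L b * s) :
    ∃ b : Basis (Fin 2) K L, ⇑b = ![1, s] :=
  ⟨basisOfTopLeSpanOfCardEqFinrank ![1, s]
    (fun x _ => by
      obtain ⟨a, b, rfl⟩ := hgen x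
      exact (Submodule.mem_span_range_iff_exists_fun K).mpr
        ⟨![a, b], by simp [Fin.sum_univ_two, Algebra.smul_def]⟩)
    (by rw [Fintype.card_fin, hquad]), coe_basisOfTopLeSpanOfCardEqFinrank _ _ _⟩

open NumberField

theorem hermitian_to_quadratic_transfer_general
    {K L : Type} [Field K] [Field L] [Algebra K L]
    (hquad : Module.finrank K L = 2)
    (σ : L ≃ₐ[K] L) (hσne : σ ≠ AlgEquiv.refl)
    {V V' : Type} [AddCommGroup V] [Module L V] [FiniteDimensional L V]
    [AddCommGroup V'] [Module L V'] [FiniteDimensional L V']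
    [Module K V] [IsScalarTower K L V] [Module K V'] [IsScalarTower K L V']
    (n : ℕ) (hn : Module.finrank L V = n) (hn' : Module.finrank L V' = n)
    (H : V → V → L) (H' : V' → V' → L)
    -- H is a nondegenerate σ-Hermitian form on V
    (haddl : ∀ v v' w : V, H (v + v') w = H v w + H v' w)
    (hsmul : ∀ (a : L) (v w : V), H (a • v) w = a * H v w)
    (hherm : ∀ v w : V, H v w = σ (H w v))
    (hnd : ∀ v : V, (∀ w : V, H v w = 0) → v = 0)
    -- H' is a nondegenerate σ-Hermitian form on V'
    (haddl' : ∀ v v' w : V', H' (v + v') w = H' v w + H' v' w)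
    (hsmul' : ∀ (a : L) (v w : V'), H' (a • v) w = a * H' v w)
    (hherm' : ∀ v w : V', H' v w = σ (H' w v))
    -- Q_H and Q_{H'} : the quadratic forms v ↦ H(v,v) with values in K
    (Q : V → K) (hQ : ∀ v : V, algebraMap K L (Q v) = H v v)
    (Q' : V' → K) (hQ' : ∀ v : V', algebraMap K L (Q' v) = H' v v)
    -- L = K(√δ)
    (δ : K) (s : L) (hs : s ^ 2 = algebraMap K L δ)
    (hLgen : ∀ x : L, ∃ a b : K, x = algebraMap K L a + algebraMap K L b * s) :
    -- (1) Hermitian isometry of (V,H),(V',H') ↔ quadratic isometry of (V_K,Q_H),(V'_K,Q_{H'})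
    ((∃ f : V ≃ₗ[L] V', ∀ v w : V, H' (f v) (f w) = H v w) ↔
      (∃ g : V ≃ₗ[K] V', ∀ v : V, Q' (g v) = Q v)) ∧
    -- (2) disc(Q_H) = δ^n modulo squares
    (∀ b : Module.Basis (Fin (2 * n)) K V,
      ∃ c : K, c ≠ 0 ∧
        (-1 : K) ^ n *
          (Matrix.of fun i j => (Q (b i + b j) - Q (b i) - Q (b j)) / 2).det =
          δ ^ n * c ^ 2) := by
  let B := hermitianForm (σ := (σ : L →+* L)) H haddl hsmul hherm
  let B' := hermitianForm (σ := (σ : L →+* L)) H' haddl' hsmul' hherm'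
  have hB : B.IsSymm := isSymm_hermitianForm H hherm
  have hB' : B'.IsSymm := isSymm_hermitianForm H' hherm'
  obtain ⟨hσs, hσs'⟩ := AlgEquiv.apply_eq_neg_of_sq_eq hσne hLgen hs
  have hs₀ : s ≠ 0 := fun h => hσs' (by simp [h])
  have h2 : (2 : L) ≠ 0 := fun h => hσs' (by rw [hσs]; linear_combination -s * h)
  refine ⟨⟨fun ⟨f, hf⟩ => ⟨f.restrictScalars K, fun v => (algebraMap K L).injective ?_⟩,
    fun ⟨g, hg⟩ => ?_⟩, fun b => ?_⟩
  · rw [hQ, hQ']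
    exact hf v v
  · obtain ⟨f, hf⟩ := exists_linearEquiv_isometry_of_isometry hB hB' hσs hs₀ h2
      (hn.trans hn'.symm) g fun x => show H' (g x) (g x) = H x x by rw [← hQ', hg, hQ]
    exact ⟨f, fun v w => hf w v⟩
  · obtain ⟨e, -, he, -, -⟩ :=
      exists_isOrthoᵢ_bases_of_isometry hB hB hσs hs₀ h2 hn hn (LinearEquiv.refl K V) fun _ => rfl
    obtain ⟨bL, hbL⟩ := exists_basis_coe_eq_of_forall_eq_add_mul hquad hLgen
    rw [← toMatrix₂_polarForm (B := B) hQ]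
    exact exists_neg_one_pow_mul_det_polarForm_eq (B := B) hQ hnd bL
      (hbL ▸ algebraMap_diagonal_eq_of_sq_eq hσs hs h2) he b

/-- Transfer to the trace quadratic form: Hermitian spaces over `L/K` are
isometric iff the associated quadratic `K`-spaces `(V_K, Q_H)` are isometric, and for
`L = K(√δ)` the discriminant of `Q_H` is the square class of `δ^n`. -/
theorem hermitian_to_quadratic_transfer
    {K L : Type} [Field K] [NumberField K] [Field L] [NumberField L] [Algebra K L]
    (htr : ∀ v : InfinitePlace K, v.IsReal)
    (hti : ∀ v : InfinitePlace L, v.IsComplex)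
    (hquad : Module.finrank K L = 2)
    (σ : L ≃ₐ[K] L) (hσne : σ ≠ AlgEquiv.refl)
    (hfix : ∀ x : L, σ x = x → ∃ k : K, algebraMap K L k = x)
    {V V' : Type} [AddCommGroup V] [Module L V] [FiniteDimensional L V]
    [AddCommGroup V'] [Module L V'] [FiniteDimensional L V']
    [Module K V] [IsScalarTower K L V] [Module K V'] [IsScalarTower K L V']
    (n : ℕ) (hn : Module.finrank L V = n) (hn' : Module.finrank L V' = n)
    (H : V → V → L) (H' : V' → V' → L)
    -- H is a nondegenerate σ-Hermitian form on V
    (haddl : ∀ v v' w : V, H (v + v') w = H v w + H v' w)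
    (haddr : ∀ v w w' : V, H v (w + w') = H v w + H v w')
    (hsmul : ∀ (a : L) (v w : V), H (a • v) w = a * H v w)
    (hherm : ∀ v w : V, H v w = σ (H w v))
    (hnd : ∀ v : V, (∀ w : V, H v w = 0) → v = 0)
    -- H' is a nondegenerate σ-Hermitian form on V'
    (haddl' : ∀ v v' w : V', H' (v + v') w = H' v w + H' v' w)
    (haddr' : ∀ v w w' : V', H' v (w + w') = H' v w + H' v w')
    (hsmul' : ∀ (a : L) (v w : V'), H' (a • v) w = a * H' v w)
    (hherm' : ∀ v w : V', H' v w = σ (H' w v))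
    (hnd' : ∀ v : V', (∀ w : V', H' v w = 0) → v = 0)
    -- Q_H and Q_{H'} : the quadratic forms v ↦ H(v,v) with values in K
    (Q : V → K) (hQ : ∀ v : V, algebraMap K L (Q v) = H v v)
    (Q' : V' → K) (hQ' : ∀ v : V', algebraMap K L (Q' v) = H' v v)
    -- L = K(√δ)
    (δ : K) (hδ : δ ≠ 0) (s : L) (hs : s ^ 2 = algebraMap K L δ)
    (hLgen : ∀ x : L, ∃ a b : K, x = algebraMap K L a + algebraMap K L b * s) :
    -- (1) Hermitian isometry of (V,H),(V',H') ↔ quadratic isometry of (V_K,Q_H),(V'_K,Q_{H'})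
    ((∃ f : V ≃ₗ[L] V', ∀ v w : V, H' (f v) (f w) = H v w) ↔
      (∃ g : V ≃ₗ[K] V', ∀ v : V, Q' (g v) = Q v)) ∧
    -- (2) disc(Q_H) = δ^n modulo squares
    (∀ b : Module.Basis (Fin (2 * n)) K V,
      ∃ c : K, c ≠ 0 ∧
        (-1 : K) ^ n *
          (Matrix.of fun i j => (Q (b i + b j) - Q (b i) - Q (b j)) / 2).det =
          δ ^ n * c ^ 2) :=
  hermitian_to_quadratic_transfer_general hquad σ hσne n hn hn' H H' haddl hsmul hherm hnd haddl'
    hsmul' hherm' Q hQ Q' hQ' δ s hs hLgen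
end

section
/- Let A be a complete discrete valuation ring of characteristic 0 with fraction field K, L a separable quadratic field extension of K with nontrivial K-automorphism σ, B the integral closure of A in L (a discrete valuation ring with σ(B) = B), and π a generator of the maximal ideal of B. Let (V,H) be a finite-dimensional L-vector space with a nondegenerate σ-Hermitian form. Then there exists a B-lattice Λ in V with π·Λ* ⊆ Λ ⊆ Λ*, i.e. a square-free lattice exists. -/
/-- The dual lattice of a lattice `Λ` (given as a set) with respect to a Hermitian form `H`,
consisting of the vectors pairing into (the image of) `B` with all of `Λ`. -/
def hermDual (B : Type) {L V : Type} [CommRing B] [Field L] [Algebra B L]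
    [AddCommGroup V] [Module L V] (H : V → V → L) (Λ : Set V) : Set V :=
  {v : V | ∀ m ∈ Λ, ∃ b : B, algebraMap B L b = H v m}

/-
Since `σ ≠ id`, polarization shows that a nondegenerate Hermitian form has a vector `v` with
`H v v ≠ 0`; then `U = L v ⊕ (v^⊥ ∩ U)` orthogonally, with `v^⊥ ∩ U` again nondegenerate, and we
induct on the dimension. Replacing `v` by `a • v` multiplies `H v v` by `a σ(a)`, and since `σ π`
is again a uniformizer, `π^k σ(π^k)` has valuation `2k`; so we may assume `H v v` has valuation
`0` or `1`. Then the line `B v` is square-free in `L v`, and an orthogonal sum of square-free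
lattices is square-free.
-/

section Hermitian

variable {L V : Type*} [Field L] [AddCommGroup V] [Module L V]

structure IsHermitianForm (σ : L →+* L) (H : V → V → L) : Prop where
  add_left : ∀ v v' w, H (v + v') w = H v w + H v' w
  smul_left : ∀ (a : L) v w, H (a • v) w = a * H v w
  conj_symm : ∀ v w, H v w = σ (H w v)

def NondegenerateOn (H : V → V → L) (U : Submodule L V) : Prop :=
  ∀ u ∈ U, (∀ u' ∈ U, H u u' = 0) → u = 0

namespace IsHermitianForm

variable {σ : L →+* L} {H : V → V → L}

def linearMapLeft (hH : IsHermitianForm σ H) (w : V) : V →ₗ[L] L where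
  toFun x := H x w
  map_add' x y := hH.add_left x y w
  map_smul' a x := hH.smul_left a x w

lemma add_right (hH : IsHermitianForm σ H) (v w w' : V) : H v (w + w') = H v w + H v w' := by
  rw [hH.conj_symm, hH.add_left, map_add, ← hH.conj_symm, ← hH.conj_symm]

lemma smul_right (hH : IsHermitianForm σ H) (a : L) (v w : V) : H v (a • w) = σ a * H v w := by
  rw [hH.conj_symm, hH.smul_left, map_mul, ← hH.conj_symm]

lemma sub_left (hH : IsHermitianForm σ H) (v v' w : V) : H (v - v') w = H v w - H v' w :=
  map_sub (hH.linearMapLeft w) v v'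

lemma eq_zero_of_swap (hH : IsHermitianForm σ H) {v w : V} (h : H w v = 0) : H v w = 0 := by
  rw [hH.conj_symm, h, map_zero]

lemma add_self (hH : IsHermitianForm σ H) (v w : V) :
    H (v + w) (v + w) = H v v + H w w + (H v w + σ (H v w)) := by
  rw [hH.add_left, hH.add_right, hH.add_right, hH.conj_symm w v]
  ring

section Lattice

variable {B : Type*} [CommRing B] [Algebra B L] [Module B V] [IsScalarTower B L V]

lemma algebraMap_smul_left (hH : IsHermitianForm σ H) (b : B) (v w : V) :
    H (b • v) w = algebraMap B L b * H v w := by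
  rw [← algebraMap_smul L b v, hH.smul_left]

lemma algebraMap_smul_right (hH : IsHermitianForm σ H) (b : B) (v w : V) :
    H v (b • w) = σ (algebraMap B L b) * H v w := by
  rw [← algebraMap_smul L b w, hH.smul_right]

end Lattice

/-- Polarization: a form all of whose values `H v v` vanish is skew, `H v w + σ (H v w) = 0`,
and applying this also to `a₀ • v` forces `H v w = 0` once `σ a₀ ≠ a₀`. -/
lemma exists_self_ne_zero (hH : IsHermitianForm σ H) {a₀ : L} (ha₀ : σ a₀ ≠ a₀)
    {U : Submodule L V} (hnd : NondegenerateOn H U) (hU : U ≠ ⊥) : ∃ v ∈ U, H v v ≠ 0 := by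
  by_contra! hiso
  have hskew : ∀ x ∈ U, ∀ y ∈ U, H x y + σ (H x y) = 0 := fun x hx y hy => by
    simpa [hiso x hx, hiso y hy, hiso _ (U.add_mem hx hy)] using (hH.add_self x y).symm
  obtain ⟨u, hu, hu0⟩ := (Submodule.ne_bot_iff U).mp hU
  refine hu0 (hnd u hu fun u' hu' => ?_)
  have h₁ := hskew u hu u' hu'
  have h₂ := hskew _ (U.smul_mem a₀ hu) u' hu'
  rw [hH.smul_left, map_mul] at h₂
  have : (a₀ - σ a₀) * H u u' = 0 := by linear_combination h₂ - σ a₀ * h₁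
  exact (mul_eq_zero.mp this).resolve_left (sub_ne_zero.mpr ha₀.symm)

def orthogonalIn (hH : IsHermitianForm σ H) (U : Submodule L V) (v : V) : Submodule L V :=
  U ⊓ LinearMap.ker (hH.linearMapLeft v)

variable {U : Submodule L V} {v : V}

lemma mem_orthogonalIn (hH : IsHermitianForm σ H) {x : V} :
    x ∈ hH.orthogonalIn U v ↔ x ∈ U ∧ H x v = 0 :=
  Iff.rfl

lemma sub_smul_mem_orthogonalIn (hH : IsHermitianForm σ H) (hvv : H v v ≠ 0) (hv : v ∈ U) {u : V}
    (hu : u ∈ U) :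
    u - (H u v / H v v) • v ∈ hH.orthogonalIn U v := by
  refine ⟨U.sub_mem hu (U.smul_mem _ hv), ?_⟩
  change H (u - (H u v / H v v) • v) v = 0
  rw [hH.sub_left, hH.smul_left, div_mul_cancel₀ _ hvv, sub_self]

lemma span_singleton_sup_orthogonalIn (hH : IsHermitianForm σ H) (hvv : H v v ≠ 0) (hv : v ∈ U) :
    Submodule.span L {v} ⊔ hH.orthogonalIn U v = U := by
  refine le_antisymm (sup_le ((Submodule.span_singleton_le_iff_mem v U).mpr hv) inf_le_left)
    fun u hu => ?_
  rw [← add_sub_cancel ((H u v / H v v) • v) u]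
  exact Submodule.add_mem_sup (Submodule.smul_mem _ _ (Submodule.mem_span_singleton_self v))
    (hH.sub_smul_mem_orthogonalIn hvv hv hu)

lemma finrank_orthogonalIn_lt [FiniteDimensional L V] (hH : IsHermitianForm σ H) (hvv : H v v ≠ 0)
    (hv : v ∈ U) :
    Module.finrank L (hH.orthogonalIn U v) < Module.finrank L U := by
  refine Submodule.finrank_lt_finrank_of_lt (lt_of_le_of_ne inf_le_left fun h => hvv ?_)
  exact ((hH.mem_orthogonalIn).mp (h ▸ hv)).2

lemma nondegenerateOn_orthogonalIn (hH : IsHermitianForm σ H) (hvv : H v v ≠ 0) (hv : v ∈ U)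
    (hnd : NondegenerateOn H U) :
    NondegenerateOn H (hH.orthogonalIn U v) := by
  intro w hw hw0
  refine hnd w hw.1 fun u hu => ?_
  have hsplit : u = (u - (H u v / H v v) • v) + (H u v / H v v) • v := (sub_add_cancel _ _).symm
  rw [hsplit, hH.add_right, hH.smul_right, hw0 _ (hH.sub_smul_mem_orthogonalIn hvv hv hu),
    ((hH.mem_orthogonalIn).mp hw).2, mul_zero, add_zero]

end IsHermitianForm

end Hermitian

structure IsSquarefreeLattice {B L V : Type} [CommRing B] [Field L] [Algebra B L]
    [AddCommGroup V] [Module L V] [Module B V] (H : V → V → L) (π : B) (U : Submodule L V)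
    (Λ : Submodule B V) : Prop where
  fg : Λ.FG
  span_eq : Submodule.span L (Λ : Set V) = U
  subset_dual : (Λ : Set V) ⊆ hermDual B H Λ
  smul_mem_of_mem_dual : ∀ x ∈ U, x ∈ hermDual B H Λ → π • x ∈ Λ

namespace IsSquarefreeLattice

variable {B L V : Type} [CommRing B] [Field L] [Algebra B L] [AddCommGroup V] [Module L V]
  [Module B V] {σ : L →+* L} {H : V → V → L} {π : B}

lemma subset {U : Submodule L V} {Λ : Submodule B V} (h : IsSquarefreeLattice H π U Λ) :
    (Λ : Set V) ⊆ U :=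
  h.span_eq ▸ Submodule.subset_span

lemma bot (hH : IsHermitianForm σ H) : IsSquarefreeLattice H π ⊥ (⊥ : Submodule B V) where
  fg := Submodule.fg_bot
  span_eq := by simp
  subset_dual x hx m _ := ⟨0, by
    rw [(Submodule.mem_bot B).mp hx, map_zero, ← map_zero (hH.linearMapLeft m)]; rfl⟩
  smul_mem_of_mem_dual x hx _ := by
    rw [(Submodule.mem_bot L).mp hx, smul_zero]
    exact Submodule.zero_mem _

lemma sup [IsScalarTower B L V] (hH : IsHermitianForm σ H) {U₁ U₂ : Submodule L V}
    {Λ₁ Λ₂ : Submodule B V} (h₁ : IsSquarefreeLattice H π U₁ Λ₁)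
    (h₂ : IsSquarefreeLattice H π U₂ Λ₂)
    (horth : ∀ x ∈ U₁, ∀ y ∈ U₂, H x y = 0) :
    IsSquarefreeLattice H π (U₁ ⊔ U₂) (Λ₁ ⊔ Λ₂) where
  fg := h₁.fg.sup h₂.fg
  span_eq := by
    have hspan : Λ₁ ⊔ Λ₂ = Submodule.span B (Λ₁ ∪ Λ₂ : Set V) := by
      rw [Submodule.span_union, Submodule.span_eq, Submodule.span_eq]
    rw [hspan, Submodule.span_span_of_tower, Submodule.span_union, h₁.span_eq, h₂.span_eq]
  subset_dual x hx y hy := by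
    obtain ⟨x₁, hx₁, x₂, hx₂, rfl⟩ := Submodule.mem_sup.mp hx
    obtain ⟨y₁, hy₁, y₂, hy₂, rfl⟩ := Submodule.mem_sup.mp hy
    obtain ⟨b₁, hb₁⟩ := h₁.subset_dual hx₁ y₁ hy₁
    obtain ⟨b₂, hb₂⟩ := h₂.subset_dual hx₂ y₂ hy₂
    refine ⟨b₁ + b₂, ?_⟩
    rw [hH.add_left, hH.add_right, hH.add_right, horth _ (h₁.subset hx₁) _ (h₂.subset hy₂),
      hH.eq_zero_of_swap (horth _ (h₁.subset hy₁) _ (h₂.subset hx₂)), map_add, hb₁, hb₂]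
    ring
  smul_mem_of_mem_dual x hx hdual := by
    obtain ⟨x₁, hx₁, x₂, hx₂, rfl⟩ := Submodule.mem_sup.mp hx
    rw [smul_add]
    refine Submodule.add_mem_sup (h₁.smul_mem_of_mem_dual x₁ hx₁ fun m hm => ?_)
      (h₂.smul_mem_of_mem_dual x₂ hx₂ fun m hm => ?_)
    · rw [← add_zero (H x₁ m), ← hH.eq_zero_of_swap (horth m (h₁.subset hm) x₂ hx₂),
        ← hH.add_left]
      exact hdual m (Submodule.mem_sup_left hm)
    · rw [← zero_add (H x₂ m), ← horth x₁ hx₁ m (h₂.subset hm), ← hH.add_left]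
      exact hdual m (Submodule.mem_sup_right hm)

lemma span_singleton [IsScalarTower B L V] (hH : IsHermitianForm σ H)
    (hσB : ∀ b : B, ∃ b' : B, σ (algebraMap B L b) = algebraMap B L b') {v : V}
    (hvv : H v v ≠ 0) (hint : H v v ∈ (algebraMap B L).range)
    (hπ : algebraMap B L π / H v v ∈ (algebraMap B L).range) :
    IsSquarefreeLattice H π (Submodule.span L {v}) (Submodule.span B {v}) where
  fg := Submodule.fg_span_singleton v
  span_eq := Submodule.span_span_of_tower B L {v}
  subset_dual x hx y hy := by
    obtain ⟨b, rfl⟩ := Submodule.mem_span_singleton.mp hx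
    obtain ⟨b', rfl⟩ := Submodule.mem_span_singleton.mp hy
    obtain ⟨b'', hb''⟩ := hσB b'
    obtain ⟨c, hc⟩ := hint
    exact ⟨b * b'' * c, by
      rw [hH.algebraMap_smul_left, hH.algebraMap_smul_right, hb'', map_mul, map_mul, hc, mul_assoc]⟩
  smul_mem_of_mem_dual x hx hdual := by
    obtain ⟨a, rfl⟩ := Submodule.mem_span_singleton.mp hx
    obtain ⟨β, hβ⟩ := hdual v (Submodule.mem_span_singleton_self v)
    obtain ⟨γ, hγ⟩ := hπ
    rw [hH.smul_left] at hβ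
    refine Submodule.mem_span_singleton.mpr ⟨γ * β, ?_⟩
    rw [← algebraMap_smul L, ← algebraMap_smul L π, smul_smul, map_mul, hγ, hβ]
    field_simp

end IsSquarefreeLattice

lemma algebraMap_units_zpow {B L : Type*} [CommRing B] [DivisionRing L] [Algebra B L] (v : Bˣ)
    (k : ℤ) : algebraMap B L ↑(v ^ k) = algebraMap B L ↑v ^ k := by
  have := congrArg Units.val (map_zpow (Units.map (algebraMap B L : B →* L)) v k)
  rwa [Units.val_zpow_eq_zpow_val, Units.coe_map, Units.coe_map] at this

/-- With `c = u π^m` and `m = 2q + r`, the scaling `a = π^(-q)` leaves `u' π^r`, `r ∈ {0, 1}`,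
because `σ π` is again a uniformizer. -/
lemma exists_mul_conj_mul_mem_range_div_mem_range {B L : Type*} [CommRing B] [IsDomain B]
    [IsDiscreteValuationRing B] [Field L] [Algebra B L] [IsFractionRing B L] (σ : L →+* L) {π : B}
    (hπ : Irreducible π) {w : Bˣ}
    (hσπ : σ (algebraMap B L π) = algebraMap B L π * algebraMap B L ↑w) {c : L}
    (hc : c ≠ 0) :
    ∃ a : L, a ≠ 0 ∧ a * σ a * c ∈ (algebraMap B L).range ∧
      algebraMap B L π / (a * σ a * c) ∈ (algebraMap B L).range := by
  set p := algebraMap B L π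
  have hp : p ≠ 0 := by simpa [p] using hπ.ne_zero
  obtain ⟨m, u, rfl⟩ := IsDiscreteValuationRing.exists_units_eq_smul_zpow_of_irreducible hπ hc
  obtain ⟨q, hq⟩ := Int.even_or_odd' m
  set v := w ^ (-q) * u
  have hscale : p ^ (-q) * σ (p ^ (-q)) * (u • p ^ m) = algebraMap B L ↑v * p ^ (m - 2 * q) := by
    rw [map_zpow₀, hσπ, Units.smul_def, Algebra.smul_def, Units.val_mul, map_mul,
      algebraMap_units_zpow, mul_zpow, zpow_sub₀ hp, two_mul, zpow_add₀ hp, zpow_neg, zpow_neg]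
    field_simp
  refine ⟨p ^ (-q), zpow_ne_zero _ hp, ?_⟩
  rw [hscale]
  rcases hq with rfl | rfl
  · rw [sub_self, zpow_zero, mul_one]
    exact ⟨⟨v, rfl⟩, ⟨π * ↑v⁻¹, by rw [map_mul, map_units_inv, div_eq_mul_inv]⟩⟩
  · rw [add_sub_cancel_left, zpow_one]
    exact ⟨⟨v * π, map_mul _ _ _⟩, ⟨↑v⁻¹, by rw [map_units_inv]; field_simp⟩⟩

lemma exists_ringEquiv_of_involutive {B L : Type*} [CommRing B] [Field L] [Algebra B L]
    [FaithfulSMul B L] {σ : L →+* L} (hσ2 : ∀ x, σ (σ x) = x)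
    (hσB : ∀ b : B, ∃ b' : B, σ (algebraMap B L b) = algebraMap B L b') :
    ∃ τ : B ≃+* B, ∀ b, σ (algebraMap B L b) = algebraMap B L (τ b) := by
  choose τ hτ using hσB
  have hinj := FaithfulSMul.algebraMap_injective B L
  have hττ : ∀ b, τ (τ b) = b := fun b => hinj (by rw [← hτ, ← hτ, hσ2])
  refine ⟨
    { toFun := τ, invFun := τ, left_inv := hττ, right_inv := hττ
      map_mul' := fun b c => hinj (by rw [← hτ, map_mul, map_mul, map_mul, hτ, hτ])
      map_add' := fun b c => hinj (by rw [← hτ, map_add, map_add, map_add, hτ, hτ]) }, hτ⟩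

theorem exists_isSquarefreeLattice {B L V : Type} [CommRing B] [IsDomain B]
    [IsDiscreteValuationRing B] [Field L] [Algebra B L] [IsFractionRing B L] [AddCommGroup V]
    [Module L V] [FiniteDimensional L V] [Module B V] [IsScalarTower B L V] {σ : L →+* L}
    {H : V → V → L} (hH : IsHermitianForm σ H)
    (hσB : ∀ b : B, ∃ b' : B, σ (algebraMap B L b) = algebraMap B L b') {a₀ : L}
    (ha₀ : σ a₀ ≠ a₀) {π : B} (hπ : Irreducible π) {w : Bˣ}
    (hσπ : σ (algebraMap B L π) = algebraMap B L π * algebraMap B L ↑w) (U : Submodule L V)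
    (hnd : NondegenerateOn H U) : ∃ Λ : Submodule B V, IsSquarefreeLattice H π U Λ := by
  induction h : Module.finrank L U using Nat.strong_induction_on generalizing U with
  | _ n ih =>
    rcases eq_or_ne U ⊥ with rfl | hU
    · exact ⟨⊥, .bot hH⟩
    obtain ⟨v₀, hv₀, hv₀v₀⟩ := hH.exists_self_ne_zero ha₀ hnd hU
    obtain ⟨a, ha, hint, hdiv⟩ :=
      exists_mul_conj_mul_mem_range_div_mem_range σ hπ hσπ hv₀v₀
    set v := a • v₀
    have hvv_eq : H v v = a * σ a * H v₀ v₀ := by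
      rw [hH.smul_left, hH.smul_right]
      ring
    have hv : v ∈ U := U.smul_mem a hv₀
    have hvv : H v v ≠ 0 := hvv_eq ▸ mul_ne_zero (mul_ne_zero ha (by simpa using ha)) hv₀v₀
    obtain ⟨Λ, hΛ⟩ := ih _ (h ▸ hH.finrank_orthogonalIn_lt hvv hv) _
      (hH.nondegenerateOn_orthogonalIn hvv hv hnd) rfl
    have horth : ∀ x ∈ Submodule.span L {v}, ∀ y ∈ hH.orthogonalIn U v, H x y = 0 := by
      intro x hx y hy
      obtain ⟨c, rfl⟩ := Submodule.mem_span_singleton.mp hx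
      rw [hH.smul_left, hH.eq_zero_of_swap ((hH.mem_orthogonalIn).mp hy).2, mul_zero]
    have hsup := (IsSquarefreeLattice.span_singleton hH hσB hvv (hvv_eq ▸ hint)
      (hvv_eq ▸ hdiv)).sup hH hΛ horth
    rw [hH.span_singleton_sup_orthogonalIn hvv hv] at hsup
    exact ⟨_, hsup⟩

theorem squarefree_lattice_exists_general
    {A K L B : Type}
    [CommRing A] [IsDomain A]
    [Field K] [Algebra A K] [IsFractionRing A K]
    [Field L] [Algebra K L]
    (hquad : Module.finrank K L = 2)
    (σ : L ≃ₐ[K] L) (hσne : σ ≠ AlgEquiv.refl) (hσ2 : ∀ x : L, σ (σ x) = x)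
    [CommRing B] [IsDomain B] [IsDiscreteValuationRing B]
    [Algebra A B] [Algebra B L] [Algebra A L]
    [IsScalarTower A B L] [IsScalarTower A K L]
    [IsIntegralClosure B A L]
    (hσB : ∀ b : B, ∃ b' : B, σ (algebraMap B L b) = algebraMap B L b')
    (π : B) (hπ : Ideal.span {π} = IsLocalRing.maximalIdeal B)
    {V : Type} [AddCommGroup V] [Module L V] [FiniteDimensional L V]
    [Module B V] [IsScalarTower B L V]
    (H : V → V → L)
    (haddl : ∀ v v' w : V, H (v + v') w = H v w + H v' w)
    (hsmul : ∀ (a : L) (v w : V), H (a • v) w = a * H v w)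
    (hherm : ∀ v w : V, H v w = σ (H w v))
    (hnd : ∀ v : V, (∀ w : V, H v w = 0) → v = 0) :
    ∃ Λ : Submodule B V, Λ.FG ∧ Submodule.span L (Λ : Set V) = ⊤ ∧
      (Λ : Set V) ⊆ hermDual B H (Λ : Set V) ∧
      ∀ v ∈ hermDual B H (Λ : Set V), π • v ∈ Λ := by
  have : FiniteDimensional K L := Module.finite_of_finrank_eq_succ hquad
  have : IsFractionRing B L := IsIntegralClosure.isFractionRing_of_finite_extension A K L B
  have hH : IsHermitianForm (σ : L →+* L) H := ⟨haddl, hsmul, hherm⟩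
  obtain ⟨a₀, ha₀⟩ : ∃ a, σ a ≠ a := by
    by_contra! h
    exact hσne (AlgEquiv.ext h)
  have hπirr : Irreducible π := (IsDiscreteValuationRing.irreducible_iff_uniformizer π).mpr hπ.symm
  obtain ⟨τ, hτ⟩ := exists_ringEquiv_of_involutive (σ := (σ : L →+* L)) hσ2 hσB
  obtain ⟨w, hw⟩ := IsDiscreteValuationRing.associated_of_irreducible B hπirr (hπirr.map τ)
  obtain ⟨Λ, hΛ⟩ := exists_isSquarefreeLattice hH hσB ha₀ hπirr
    (w := w) ((hτ π).trans (by rw [← hw, map_mul])) ⊤ fun u _ h => hnd u fun v => h v trivial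
  exact ⟨Λ, hΛ.fg, hΛ.span_eq, hΛ.subset_dual, fun v hv => hΛ.smul_mem_of_mem_dual v trivial hv⟩

/-- In the local situation there exists a square-free lattice, i.e. a
`B`-lattice `Λ` with `π·Λ* ⊆ Λ ⊆ Λ*`. -/
theorem squarefree_lattice_exists
    {A K L B : Type}
    [CommRing A] [IsDomain A] [IsDiscreteValuationRing A] [CharZero A]
    [IsAdicComplete (IsLocalRing.maximalIdeal A) A]
    [Field K] [Algebra A K] [IsFractionRing A K]
    [Field L] [Algebra K L] [Algebra.IsSeparable K L]
    (hquad : Module.finrank K L = 2)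
    (σ : L ≃ₐ[K] L) (hσne : σ ≠ AlgEquiv.refl) (hσ2 : ∀ x : L, σ (σ x) = x)
    [CommRing B] [IsDomain B] [IsDiscreteValuationRing B]
    [Algebra A B] [Algebra B L] [Algebra A L]
    [IsScalarTower A B L] [IsScalarTower A K L]
    [IsIntegralClosure B A L]
    (hσB : ∀ b : B, ∃ b' : B, σ (algebraMap B L b) = algebraMap B L b')
    (π : B) (hπ : Ideal.span {π} = IsLocalRing.maximalIdeal B)
    {V : Type} [AddCommGroup V] [Module L V] [FiniteDimensional L V]
    [Module B V] [IsScalarTower B L V]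
    (H : V → V → L)
    (haddl : ∀ v v' w : V, H (v + v') w = H v w + H v' w)
    (haddr : ∀ v w w' : V, H v (w + w') = H v w + H v w')
    (hsmul : ∀ (a : L) (v w : V), H (a • v) w = a * H v w)
    (hherm : ∀ v w : V, H v w = σ (H w v))
    (hnd : ∀ v : V, (∀ w : V, H v w = 0) → v = 0) :
    ∃ Λ : Submodule B V, Λ.FG ∧ Submodule.span L (Λ : Set V) = ⊤ ∧
      (Λ : Set V) ⊆ hermDual B H (Λ : Set V) ∧
      ∀ v ∈ hermDual B H (Λ : Set V), π • v ∈ Λ :=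
  squarefree_lattice_exists_general (A := A) hquad σ hσne hσ2 hσB π hπ H haddl hsmul hherm hnd
end

section
/- In the local setting, assume L/K is ramified, i.e. the maximal ideal of A generates the square of the maximal ideal of B. Then σ induces the identity on the residue field F = B/πB (which coincides with the residue field of A), and for every square-free B-lattice Λ in (V,H), the map (ℓ + πΛ*, m + πΛ*) ↦ H(ℓ,m) + πB is a well-defined nondegenerate symmetric F-bilinear form on the F-vector space Λ/πΛ*. -/
theorem IsDiscreteValuationRing.notMem_maximalIdeal_sq {B : Type*} [CommRing B] [IsDomain B]
    [IsDiscreteValuationRing B] {π : B} (hπ : Ideal.span {π} = IsLocalRing.maximalIdeal B) :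
    π ∉ IsLocalRing.maximalIdeal B ^ 2 := by
  have hirr : Irreducible π :=
    (IsDiscreteValuationRing.irreducible_iff_uniformizer π).mpr hπ.symm
  rw [← hπ, Ideal.span_singleton_pow, Ideal.mem_span_singleton]
  simpa using (pow_dvd_pow_iff hirr.ne_zero hirr.not_isUnit (a := π) (n := 2) (m := 1)).not.mpr
    (by norm_num)

namespace IsLocalRing

variable {A B : Type*} [CommRing A] [IsLocalRing A] [CommRing B] [IsLocalRing B] [Algebra A B]

theorem mem_maximalIdeal_and_mem_maximalIdeal_of_add_mul_mem_map {π : B}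
    (hπ : π ∈ maximalIdeal B)
    (hle : (maximalIdeal A).map (algebraMap A B) ≤ maximalIdeal B)
    (hπI : π ∉ (maximalIdeal A).map (algebraMap A B)) {a b : A}
    (h : algebraMap A B a + algebraMap A B b * π ∈ (maximalIdeal A).map (algebraMap A B)) :
    a ∈ maximalIdeal A ∧ b ∈ maximalIdeal A := by
  set I := (maximalIdeal A).map (algebraMap A B)
  have ha : a ∈ maximalIdeal A := by
    have : algebraMap A B a ∈ maximalIdeal B := by
      simpa using (maximalIdeal B).sub_mem (hle h)
        ((maximalIdeal B).mul_mem_left (algebraMap A B b) hπ)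
    exact fun hunit => this (hunit.map _)
  refine ⟨ha, fun hunit => hπI ?_⟩
  have hbπ : algebraMap A B b * π ∈ I := by
    simpa using I.sub_mem h (Ideal.mem_map_of_mem _ ha)
  obtain ⟨v, hv⟩ := (hunit.map (algebraMap A B)).exists_left_inv
  simpa [← mul_assoc, hv] using I.mul_mem_left v hbπ

theorem linearIndependent_mk_one_mk {π : B} (hπ : π ∈ maximalIdeal B)
    (hle : (maximalIdeal A).map (algebraMap A B) ≤ maximalIdeal B)
    (hπI : π ∉ (maximalIdeal A).map (algebraMap A B)) :
    LinearIndependent (A ⧸ maximalIdeal A)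
      ![Ideal.Quotient.mk ((maximalIdeal A).map (algebraMap A B)) 1, Ideal.Quotient.mk _ π] := by
  rw [LinearIndependent.pair_iff]
  intro s t hst
  obtain ⟨a, rfl⟩ := Ideal.Quotient.mk_surjective s
  obtain ⟨b, rfl⟩ := Ideal.Quotient.mk_surjective t
  rw [Ideal.Quotient.mk_smul_mk_quotient_map_quotient,
    Ideal.Quotient.mk_smul_mk_quotient_map_quotient, ← map_add,
    Ideal.Quotient.eq_zero_iff_mem, mul_one] at hst
  simpa only [Ideal.Quotient.eq_zero_iff_mem] using
    mem_maximalIdeal_and_mem_maximalIdeal_of_add_mul_mem_map hπ hle hπI hst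

theorem surjective_mk_algebraMap_of_finrank_eq_two {π : B}
    (hπ : Ideal.span {π} = maximalIdeal B)
    (hle : (maximalIdeal A).map (algebraMap A B) ≤ maximalIdeal B)
    (hπI : π ∉ (maximalIdeal A).map (algebraMap A B))
    (hdim : Module.finrank (A ⧸ maximalIdeal A)
      (B ⧸ (maximalIdeal A).map (algebraMap A B)) = 2) :
    Function.Surjective (fun a : A => Ideal.Quotient.mk (Ideal.span {π}) (algebraMap A B a)) := by
  let := Ideal.Quotient.field (maximalIdeal A)
  set I := (maximalIdeal A).map (algebraMap A B)
  have hspan := (linearIndependent_mk_one_mk (hπ ▸ Ideal.mem_span_singleton_self π) hle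
    hπI).span_eq_top_of_card_eq_finrank (by rw [hdim, Fintype.card_fin])
  intro y
  obtain ⟨x, rfl⟩ := Ideal.Quotient.mk_surjective y
  have hx : Ideal.Quotient.mk I x ∈ Submodule.span (A ⧸ maximalIdeal A)
      {Ideal.Quotient.mk I 1, Ideal.Quotient.mk I π} := by
    rw [← Matrix.range_cons_cons_empty, hspan]; trivial
  obtain ⟨s, t, hst⟩ := Submodule.mem_span_pair.mp hx
  obtain ⟨a, rfl⟩ := Ideal.Quotient.mk_surjective s
  obtain ⟨b, rfl⟩ := Ideal.Quotient.mk_surjective t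
  rw [Ideal.Quotient.mk_smul_mk_quotient_map_quotient,
    Ideal.Quotient.mk_smul_mk_quotient_map_quotient, ← map_add,
    Ideal.Quotient.mk_eq_mk_iff_sub_mem, mul_one] at hst
  refine ⟨a, (Ideal.Quotient.mk_eq_mk_iff_sub_mem _ _).mpr ?_⟩
  have hsplit : algebraMap A B a - x =
      (algebraMap A B a + algebraMap A B b * π - x) - algebraMap A B b * π := by ring
  rw [hsplit]
  exact Ideal.sub_mem _ (hπ ▸ hle hst)
    (Ideal.mul_mem_left _ _ (Ideal.mem_span_singleton_self π))

end IsLocalRing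

theorem IsIntegralClosure.finrank_quotient_map_maximalIdeal {A : Type*} (K L : Type*)
    {B : Type*} [CommRing A] [IsDomain A] [IsDiscreteValuationRing A] [Field K] [Algebra A K]
    [IsFractionRing A K] [Field L] [Algebra K L] [Algebra.IsSeparable K L]
    [FiniteDimensional K L] [CommRing B] [IsDomain B] [Algebra A B] [Algebra B L] [Algebra A L]
    [IsScalarTower A B L] [IsScalarTower A K L] [IsIntegralClosure B A L] :
    Module.finrank (A ⧸ IsLocalRing.maximalIdeal A)
      (B ⧸ (IsLocalRing.maximalIdeal A).map (algebraMap A B)) = Module.finrank K L := by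
  have := IsIntegralClosure.finite A K L B
  have := IsIntegralClosure.isFractionRing_of_finite_extension A K L B
  have : Module.IsTorsionFree A L := .trans_faithfulSMul A K L
  have : Module.IsTorsionFree A B := .of_faithfulSMul (S := A) B L
  rw [IsLocalRing.finrank_quotient_map, IsFractionRing.finrank_eq A K B L]

theorem AlgHom.apply_sub_self_mem_of_surjective_mk_algebraMap {A B : Type*} [CommRing A]
    [CommRing B] [Algebra A B] (τ : B →ₐ[A] B) {I : Ideal B} (hτ : ∀ x ∈ I, τ x ∈ I)
    (hsurj : Function.Surjective (fun a : A => Ideal.Quotient.mk I (algebraMap A B a)))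
    (b : B) : τ b - b ∈ I := by
  obtain ⟨a, ha⟩ := hsurj (Ideal.Quotient.mk I b)
  have hab : algebraMap A B a - b ∈ I := Ideal.Quotient.eq.mp ha
  have hsplit : τ b - b = (algebraMap A B a - b) - τ (algebraMap A B a - b) := by
    rw [map_sub, AlgHom.commutes]; ring
  rw [hsplit]
  exact I.sub_mem hab (hτ _ hab)

section HermitianLattice

variable {B L V : Type} [CommRing B] [Field L] [Algebra B L]
  {H : V → V → L} {σ : L → L} {π : B}

theorem exists_mul_eq_apply_sub_apply_swap (hherm : ∀ v w : V, H v w = σ (H w v))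
    (hσ : ∀ b : B,
      ∃ c : B, σ (algebraMap B L b) = algebraMap B L c ∧ c - b ∈ Ideal.span {π})
    {v w : V} {b : B} (hb : algebraMap B L b = H v w) :
    ∃ d : B, algebraMap B L (π * d) = H v w - H w v := by
  obtain ⟨c, hc, hcb⟩ := hσ b
  obtain ⟨d, hd⟩ := Ideal.mem_span_singleton'.mp hcb
  refine ⟨-d, ?_⟩
  rw [hherm w v, ← hb, hc, ← map_sub, mul_neg, mul_comm, hd, neg_sub]

variable [AddCommGroup V] [Module L V] [Module B V] [IsScalarTower B L V] {Λ : Set V}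

theorem apply_algebraMap_smul_left (hsmul : ∀ (a : L) (v w : V), H (a • v) w = a * H v w)
    (b : B) (v w : V) : H (b • v) w = algebraMap B L b * H v w := by
  rw [← algebraMap_smul L b v, hsmul]

theorem exists_mul_eq_apply_smul_left (hsmul : ∀ (a : L) (v w : V), H (a • v) w = a * H v w)
    {u m : V} (hu : u ∈ hermDual B H Λ) (hm : m ∈ Λ) :
    ∃ b : B, algebraMap B L (π * b) = H (π • u) m := by
  obtain ⟨b, hb⟩ := hu m hm
  exact ⟨b, by rw [map_mul, hb, apply_algebraMap_smul_left hsmul]⟩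

theorem exists_mul_eq_apply_smul_right (hsmul : ∀ (a : L) (v w : V), H (a • v) w = a * H v w)
    (hherm : ∀ v w : V, H v w = σ (H w v))
    (hσ : ∀ b : B,
      ∃ c : B, σ (algebraMap B L b) = algebraMap B L c ∧ c - b ∈ Ideal.span {π})
    {u m : V} (hu : u ∈ hermDual B H Λ) (hm : m ∈ Λ) :
    ∃ b : B, algebraMap B L (π * b) = H m (π • u) := by
  obtain ⟨b, hb⟩ := exists_mul_eq_apply_smul_left (π := π) hsmul hu hm
  obtain ⟨d, hd⟩ := exists_mul_eq_apply_sub_apply_swap hherm hσ hb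
  exact ⟨b - d, by rw [mul_sub, map_sub, hb, hd, sub_sub_cancel]⟩

theorem exists_mul_eq_sub_of_sub_eq_smul
    (haddl : ∀ v v' w : V, H (v + v') w = H v w + H v' w)
    (haddr : ∀ v w w' : V, H v (w + w') = H v w + H v w')
    (hsmul : ∀ (a : L) (v w : V), H (a • v) w = a * H v w)
    (hherm : ∀ v w : V, H v w = σ (H w v))
    (hσ : ∀ b : B,
      ∃ c : B, σ (algebraMap B L b) = algebraMap B L c ∧ c - b ∈ Ideal.span {π})
    {ℓ ℓ' m m' u w : V} (hℓ' : ℓ' ∈ Λ) (hm : m ∈ Λ) (hu : u ∈ hermDual B H Λ)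
    (hw : w ∈ hermDual B H Λ) (hℓu : ℓ - ℓ' = π • u) (hmw : m - m' = π • w) :
    ∃ b : B, algebraMap B L (π * b) = H ℓ m - H ℓ' m' := by
  obtain ⟨b, hb⟩ := exists_mul_eq_apply_smul_left (π := π) hsmul hu hm
  obtain ⟨c, hc⟩ := exists_mul_eq_apply_smul_right hsmul hherm hσ hw hℓ'
  have hsplit_left : H ℓ m = H (ℓ - ℓ') m + H ℓ' m := by rw [← haddl, sub_add_cancel]
  have hsplit_right : H ℓ' m = H ℓ' (m - m') + H ℓ' m' := by rw [← haddr, sub_add_cancel]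
  have hsplit : H ℓ m - H ℓ' m' = H (ℓ - ℓ') m + H ℓ' (m - m') := by
    linear_combination hsplit_left + hsplit_right
  exact ⟨b + c, by rw [hsplit, hℓu, hmw, ← hb, ← hc, mul_add, map_add]⟩

theorem exists_mem_hermDual_eq_smul (hsmul : ∀ (a : L) (v w : V), H (a • v) w = a * H v w)
    (hπ : algebraMap B L π ≠ 0) {ℓ : V}
    (h : ∀ m ∈ Λ, ∃ b : B, algebraMap B L (π * b) = H ℓ m) :
    ∃ u ∈ hermDual B H Λ, ℓ = π • u := by
  refine ⟨(algebraMap B L π)⁻¹ • ℓ, fun m hm => ?_, ?_⟩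
  · obtain ⟨b, hb⟩ := h m hm
    exact ⟨b, by rw [hsmul, ← hb, map_mul, inv_mul_cancel_left₀ hπ]⟩
  · rw [← algebraMap_smul L π, smul_smul, mul_inv_cancel₀ hπ, one_smul]

end HermitianLattice

theorem ramified_induced_symmetric_form_general
    {A K L B : Type}
    [CommRing A] [IsDomain A] [IsDiscreteValuationRing A]
    [Field K] [Algebra A K] [IsFractionRing A K]
    [Field L] [Algebra K L] [Algebra.IsSeparable K L]
    (hquad : Module.finrank K L = 2)
    (σ : L ≃ₐ[K] L)
    [CommRing B] [IsDomain B] [IsDiscreteValuationRing B]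
    [Algebra A B] [Algebra B L] [Algebra A L]
    [IsScalarTower A B L] [IsScalarTower A K L]
    [IsIntegralClosure B A L]
    (π : B) (hπ : Ideal.span {π} = IsLocalRing.maximalIdeal B)
    -- L/K is ramified: the maximal ideal of A generates the square of the maximal ideal of B
    (hram : Ideal.map (algebraMap A B) (IsLocalRing.maximalIdeal A) =
      (IsLocalRing.maximalIdeal B) ^ 2)
    {V : Type} [AddCommGroup V] [Module L V]
    [Module B V] [IsScalarTower B L V]
    (H : V → V → L)
    (haddl : ∀ v v' w : V, H (v + v') w = H v w + H v' w)
    (haddr : ∀ v w w' : V, H v (w + w') = H v w + H v w')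
    (hsmul : ∀ (a : L) (v w : V), H (a • v) w = a * H v w)
    (hherm : ∀ v w : V, H v w = σ (H w v)) :
    -- σ induces the identity on F = B/πB
    (∀ b b' : B, σ (algebraMap B L b) = algebraMap B L b' →
      b' - b ∈ Ideal.span {π}) ∧
    -- F coincides with the residue field of A
    Function.Surjective
      (fun a : A => Ideal.Quotient.mk (Ideal.span {π}) (algebraMap A B a)) ∧
    -- for every square-free lattice Λ, `(ℓ + πΛ*, m + πΛ*) ↦ H(ℓ,m) + πB` is a
    -- well-defined nondegenerate symmetric F-bilinear form on Λ/πΛ*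
    (∀ Λ : Submodule B V, Λ.FG → Submodule.span L (Λ : Set V) = ⊤ →
      (Λ : Set V) ⊆ hermDual B H (Λ : Set V) →
      (∀ v ∈ hermDual B H (Λ : Set V), π • v ∈ Λ) →
      ((∀ ℓ ∈ Λ, ∀ m ∈ Λ, ∃ b : B, algebraMap B L b = H ℓ m) ∧
        (∀ ℓ ℓ' m m' : V, ℓ ∈ Λ → ℓ' ∈ Λ → m ∈ Λ → m' ∈ Λ →
          (∃ u ∈ hermDual B H (Λ : Set V), ℓ - ℓ' = π • u) →
          (∃ u ∈ hermDual B H (Λ : Set V), m - m' = π • u) →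
          ∃ b : B, algebraMap B L (π * b) = H ℓ m - H ℓ' m') ∧
        (∀ ℓ ∈ Λ, ∀ m ∈ Λ, ∃ b : B, algebraMap B L (π * b) = H ℓ m - H m ℓ) ∧
        (∀ (b : B) (ℓ : V), ℓ ∈ Λ → ∀ m ∈ Λ,
          ∃ c : B, algebraMap B L (π * c) = H (b • ℓ) m - algebraMap B L b * H ℓ m) ∧
        (∀ ℓ ∈ Λ, (∀ m ∈ Λ, ∃ b : B, algebraMap B L (π * b) = H ℓ m) →
          ∃ u ∈ hermDual B H (Λ : Set V), ℓ = π • u))) := by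
  have : FiniteDimensional K L := Module.finite_of_finrank_eq_succ hquad
  have hBL : Function.Injective (algebraMap B L) := IsIntegralClosure.algebraMap_injective B A L
  have hsurj := IsLocalRing.surjective_mk_algebraMap_of_finrank_eq_two hπ
    (hram ▸ Ideal.pow_le_self two_ne_zero)
    (hram ▸ IsDiscreteValuationRing.notMem_maximalIdeal_sq hπ)
    (by rw [IsIntegralClosure.finrank_quotient_map_maximalIdeal K L, hquad])
  -- `σ` restricts to an automorphism `τ` of the local ring `B`, so `τ` preserves `πB`.
  set τ := galRestrict A K L B σ
  have hτπ : ∀ x ∈ Ideal.span {π}, τ x ∈ Ideal.span {π} := by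
    rw [hπ]; exact map_nonunit (τ : B →+* B)
  have hσ : ∀ b : B,
      ∃ c : B, σ (algebraMap B L b) = algebraMap B L c ∧ c - b ∈ Ideal.span {π} :=
    fun b => ⟨τ b, (algebraMap_galRestrict_apply A σ b).symm,
      AlgHom.apply_sub_self_mem_of_surjective_mk_algebraMap (τ : B →ₐ[A] B) hτπ hsurj b⟩
  have hπL : algebraMap B L π ≠ 0 := (map_ne_zero_iff _ hBL).mpr fun h =>
    IsDiscreteValuationRing.not_a_field B (by rw [← hπ, h, Ideal.span_singleton_eq_bot])
  refine ⟨fun b b' h => ?_, hsurj, fun Λ _ _ hsub _ =>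
    ⟨fun ℓ hℓ m hm => hsub hℓ m hm, ?_, fun ℓ hℓ m hm => ?_,
      fun b ℓ _ m _ =>
        ⟨0, by rw [apply_algebraMap_smul_left hsmul, mul_zero, map_zero, sub_self]⟩,
      fun ℓ _ => exists_mem_hermDual_eq_smul hsmul hπL⟩⟩
  · obtain ⟨c, hc, hcb⟩ := hσ b
    rwa [hBL (h.symm.trans hc)]
  · rintro ℓ ℓ' m m' - hℓ' hm - ⟨u, hu, hℓu⟩ ⟨w, hw, hmw⟩
    exact exists_mul_eq_sub_of_sub_eq_smul haddl haddr hsmul hherm hσ hℓ' hm hu hw hℓu hmw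
  · obtain ⟨b, hb⟩ := hsub hℓ m hm
    exact exists_mul_eq_apply_sub_apply_swap hherm hσ hb

/-- In the ramified local situation, `σ` induces the identity on the residue
field `F = B/πB` (which coincides with the residue field of `A`), and for a square-free
lattice `Λ` the form `H` induces a well-defined nondegenerate symmetric `F`-bilinear form
on `Λ/πΛ*` (stated on representatives). -/
theorem ramified_induced_symmetric_form
    {A K L B : Type}
    [CommRing A] [IsDomain A] [IsDiscreteValuationRing A] [CharZero A]
    [IsAdicComplete (IsLocalRing.maximalIdeal A) A]
    [Field K] [Algebra A K] [IsFractionRing A K]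
    [Field L] [Algebra K L] [Algebra.IsSeparable K L]
    (hquad : Module.finrank K L = 2)
    (σ : L ≃ₐ[K] L) (hσne : σ ≠ AlgEquiv.refl) (hσ2 : ∀ x : L, σ (σ x) = x)
    [CommRing B] [IsDomain B] [IsDiscreteValuationRing B]
    [Algebra A B] [Algebra B L] [Algebra A L]
    [IsScalarTower A B L] [IsScalarTower A K L]
    [IsIntegralClosure B A L]
    (hσB : ∀ b : B, ∃ b' : B, σ (algebraMap B L b) = algebraMap B L b')
    (π : B) (hπ : Ideal.span {π} = IsLocalRing.maximalIdeal B)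
    -- L/K is ramified: the maximal ideal of A generates the square of the maximal ideal of B
    (hram : Ideal.map (algebraMap A B) (IsLocalRing.maximalIdeal A) =
      (IsLocalRing.maximalIdeal B) ^ 2)
    {V : Type} [AddCommGroup V] [Module L V] [FiniteDimensional L V]
    [Module B V] [IsScalarTower B L V]
    (H : V → V → L)
    (haddl : ∀ v v' w : V, H (v + v') w = H v w + H v' w)
    (haddr : ∀ v w w' : V, H v (w + w') = H v w + H v w')
    (hsmul : ∀ (a : L) (v w : V), H (a • v) w = a * H v w)
    (hherm : ∀ v w : V, H v w = σ (H w v))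
    (hnd : ∀ v : V, (∀ w : V, H v w = 0) → v = 0) :
    -- σ induces the identity on F = B/πB
    (∀ b b' : B, σ (algebraMap B L b) = algebraMap B L b' →
      b' - b ∈ Ideal.span {π}) ∧
    -- F coincides with the residue field of A
    Function.Surjective
      (fun a : A => Ideal.Quotient.mk (Ideal.span {π}) (algebraMap A B a)) ∧
    -- for every square-free lattice Λ, `(ℓ + πΛ*, m + πΛ*) ↦ H(ℓ,m) + πB` is a
    -- well-defined nondegenerate symmetric F-bilinear form on Λ/πΛ*
    (∀ Λ : Submodule B V, Λ.FG → Submodule.span L (Λ : Set V) = ⊤ →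
      (Λ : Set V) ⊆ hermDual B H (Λ : Set V) →
      (∀ v ∈ hermDual B H (Λ : Set V), π • v ∈ Λ) →
      ((∀ ℓ ∈ Λ, ∀ m ∈ Λ, ∃ b : B, algebraMap B L b = H ℓ m) ∧
        (∀ ℓ ℓ' m m' : V, ℓ ∈ Λ → ℓ' ∈ Λ → m ∈ Λ → m' ∈ Λ →
          (∃ u ∈ hermDual B H (Λ : Set V), ℓ - ℓ' = π • u) →
          (∃ u ∈ hermDual B H (Λ : Set V), m - m' = π • u) →
          ∃ b : B, algebraMap B L (π * b) = H ℓ m - H ℓ' m') ∧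
        (∀ ℓ ∈ Λ, ∀ m ∈ Λ, ∃ b : B, algebraMap B L (π * b) = H ℓ m - H m ℓ) ∧
        (∀ (b : B) (ℓ : V), ℓ ∈ Λ → ∀ m ∈ Λ,
          ∃ c : B, algebraMap B L (π * c) = H (b • ℓ) m - algebraMap B L b * H ℓ m) ∧
        (∀ ℓ ∈ Λ, (∀ m ∈ Λ, ∃ b : B, algebraMap B L (π * b) = H ℓ m) →
          ∃ u ∈ hermDual B H (Λ : Set V), ℓ = π • u))) :=
  ramified_induced_symmetric_form_general hquad σ π hπ hram H haddl haddr hsmul hherm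
end

section
/- In the local setting, assume L/K is unramified, i.e. the maximal ideal of A generates the maximal ideal of B, with uniformizer π ∈ A, and let F = B/πB. For every square-free B-lattice Λ in (V,H) with B-basis (b₁,…,b_n), the π-adic valuation of det((H(b_i,b_j))_{i,j}) is congruent modulo 2 to dim_F(Λ*/Λ). -/
/-- `quotDim B π S Λ d` says that the quotient of (the span of) `S` by the submodule `Λ`
has dimension `d` over the residue field `B/(π)`: there are `d` elements of `S` spanning
`S` modulo `Λ` that are linearly independent modulo `Λ` over `B/(π)`. -/
def quotDim (B : Type) {V : Type} [CommRing B] [AddCommGroup V] [Module B V]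
    (π : B) (S : Set V) (Λ : Submodule B V) (d : ℕ) : Prop :=
  ∃ v : Fin d → V, (∀ i, v i ∈ S) ∧
    (∀ x ∈ S, ∃ c : Fin d → B, x - ∑ i, c i • v i ∈ Λ) ∧
    (∀ c : Fin d → B, (∑ i, c i • v i) ∈ Λ → ∀ i, c i ∈ Ideal.span {π})

/-!
With `G` the Gram matrix of `b` (entries in `B` because `Λ ⊆ Λ*`), the dual basis of `b`
identifies `Λ*` with `B^n` so that `Λ` becomes the row span `N` of `G`. Square-freeness says
`π B^n ⊆ N`, so `N` is the preimage of a subspace `W` of `F^n` and `d = dim (F^n / W)`.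
Lifting a basis of `W` to `N` and adding the `d` given vectors yields an invertible `E` over `B`
such that `N` is the row span of `diag(1, …, 1, π, …, π) E`. Matrices with the same row span
have associated determinants, so `det G` is a unit times `π ^ d`: its valuation is exactly `d`.
-/

open Submodule IsLocalRing

namespace Matrix

variable {R ι : Type*} [CommRing R] [Fintype ι] [DecidableEq ι]

theorem det_dvd_det_of_span_row_le {A C : Matrix ι ι R}
    (h : span R (Set.range A.row) ≤ span R (Set.range C.row)) : C.det ∣ A.det := by
  have hrow : ∀ i, ∃ x, x ᵥ* C = A.row i := fun i => by
    simpa [← range_vecMulLinear] using h (subset_span ⟨i, rfl⟩)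
  choose X hX using hrow
  have hXC : of X * C = A := by ext i j; exact congrFun (hX i) j
  exact ⟨(of X).det, by rw [← hXC, det_mul, mul_comm]⟩

theorem associated_det_of_span_row_eq [IsDomain R] {A C : Matrix ι ι R}
    (h : span R (Set.range A.row) = span R (Set.range C.row)) : Associated A.det C.det :=
  associated_of_dvd_dvd (det_dvd_det_of_span_row_le h.ge) (det_dvd_det_of_span_row_le h.le)

theorem span_row_eq_top_of_isUnit_det {A : Matrix ι ι R} (h : IsUnit A.det) :
    span R (Set.range A.row) = ⊤ := by
  rw [← range_vecMulLinear, LinearMap.range_eq_top]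
  exact vecMul_surjective_iff_isUnit.mpr ((isUnit_iff_isUnit_det A).mpr h)

theorem isUnit_det_of_linearIndependent_map_residue [IsLocalRing R] {A : Matrix ι ι R}
    (h : LinearIndependent (ResidueField R) (A.map (residue R)).row) : IsUnit A.det := by
  rw [← residue_ne_zero_iff_isUnit, RingHom.map_det]
  exact ((isUnit_iff_isUnit_det _).mp (linearIndependent_rows_iff_isUnit.mp h)).ne_zero

end Matrix

theorem span_range_sumElim_smul_eq {R M κ μ : Type*} [CommRing R] [AddCommGroup M]
    [Module R M] [Fintype κ] [Fintype μ] {N : Submodule R M} {π : R} {u : κ → M} {w : μ → M}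
    (htop : span R (Set.range (Sum.elim u w)) = ⊤) (hu : ∀ j, u j ∈ N)
    (hπN : ∀ x, π • x ∈ N) (hw : ∀ c : μ → R, ∑ i, c i • w i ∈ N → ∀ i, c i ∈ Ideal.span {π}) :
    span R (Set.range (Sum.elim u (π • w))) = N := by
  refine le_antisymm (span_le.mpr <| Set.range_subset_iff.mpr ?_) fun x hx => ?_
  · rintro (j | i)
    exacts [hu j, hπN (w i)]
  obtain ⟨c, rfl⟩ := (mem_span_range_iff_exists_fun R).mp (htop ▸ mem_top : x ∈ span R _)
  rw [Fintype.sum_sum_type] at hx ⊢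
  have hcw : ∑ i, c (.inr i) • w i ∈ N := by
    simpa using
      N.sub_mem hx (N.sum_mem (t := Finset.univ) fun j _ => N.smul_mem (c (.inl j)) (hu j))
  choose t ht using fun i => Ideal.mem_span_singleton'.mp (hw _ hcw i)
  refine add_mem (sum_mem fun j _ => smul_mem _ _ (subset_span ⟨.inl j, rfl⟩))
    (sum_mem fun i _ => ?_)
  rw [← ht i, mul_smul]
  exact smul_mem _ _ (subset_span ⟨.inr i, rfl⟩)

section Residue

variable {R : Type*} [CommRing R] [IsLocalRing R] {ι : Type*}

variable (ι) in
noncomputable def residueVec : (ι → R) →ₗ[R] ι → ResidueField R :=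
  (Algebra.linearMap R (ResidueField R)).compLeft ι

noncomputable def residueSpan (N : Submodule R (ι → R)) :
    Submodule (ResidueField R) (ι → ResidueField R) :=
  span (ResidueField R) (residueVec ι '' N)

theorem residueVec_surjective : Function.Surjective (residueVec (R := R) ι) := fun y =>
  ⟨fun i => (residue_surjective (y i)).choose,
    funext fun i => (residue_surjective (y i)).choose_spec⟩

theorem residueVec_sum_smul {κ : Type*} [Fintype κ] (c : κ → R) (w : κ → ι → R) :
    residueVec ι (∑ i, c i • w i) = ∑ i, residue R (c i) • residueVec ι (w i) := by
  simp [← ResidueField.algebraMap_eq, algebraMap_smul]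

theorem ker_residueVec_le {π : R} (hπ : Ideal.span {π} = maximalIdeal R)
    {N : Submodule R (ι → R)} (hπN : ∀ x, π • x ∈ N) : LinearMap.ker (residueVec ι) ≤ N := by
  intro x hx
  have hdvd : ∀ i, ∃ y, x i = π * y := fun i => by
    have : residue R (x i) = 0 := congrFun hx i
    rw [residue_eq_zero_iff, ← hπ] at this
    exact Ideal.mem_span_singleton.mp this
  choose y hy using hdvd
  simpa [show π • y = x from (funext hy).symm] using hπN y

theorem residueVec_mem_residueSpan_iff {N : Submodule R (ι → R)}
    (hN : LinearMap.ker (residueVec ι) ≤ N) {x : ι → R} :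
    residueVec ι x ∈ residueSpan N ↔ x ∈ N := by
  refine ⟨fun hx => ?_, fun hx => subset_span ⟨x, hx, rfl⟩⟩
  rw [residueSpan, ← restrictScalars_mem R, restrictScalars_span R _ residue_surjective,
    span_image, span_eq] at hx
  obtain ⟨y, hy, hxy⟩ := hx
  have : x - y ∈ N := hN (by simp [hxy])
  simpa using N.add_mem this hy

theorem linearIndependent_mkQ_residueSpan {N : Submodule R (ι → R)}
    (hN : LinearMap.ker (residueVec ι) ≤ N) {κ : Type*} [Fintype κ] {w : κ → ι → R}
    (hw : ∀ c : κ → R, ∑ i, c i • w i ∈ N → ∀ i, c i ∈ maximalIdeal R) :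
    LinearIndependent (ResidueField R) ((residueSpan N).mkQ ∘ residueVec ι ∘ w) := by
  rw [Fintype.linearIndependent_iff]
  intro g hg i
  choose c hc using fun i => residue_surjective (g i)
  have hcw : ∑ i, c i • w i ∈ N := by
    rw [← residueVec_mem_residueSpan_iff hN, ← Quotient.mk_eq_zero, ← mkQ_apply,
      residueVec_sum_smul, map_sum]
    simpa [hc] using hg
  rw [← hc i, residue_eq_zero_iff]
  exact hw c hcw i

theorem span_range_mkQ_residueSpan_eq_top {N : Submodule R (ι → R)} {κ : Type*} [Fintype κ]
    {w : κ → ι → R} (hw : ∀ x, ∃ c : κ → R, x - ∑ i, c i • w i ∈ N) :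
    span (ResidueField R) (Set.range ((residueSpan N).mkQ ∘ residueVec ι ∘ w)) = ⊤ := by
  refine eq_top_iff'.mpr fun y => ?_
  obtain ⟨y, rfl⟩ := mkQ_surjective _ y
  obtain ⟨x, rfl⟩ := residueVec_surjective y
  obtain ⟨c, hc⟩ := hw x
  have hx : (residueSpan N).mkQ (residueVec ι x) =
      (residueSpan N).mkQ (residueVec ι (∑ i, c i • w i)) :=
    (Submodule.Quotient.eq _).mpr (subset_span ⟨_, hc, map_sub _ _ _⟩)
  rw [hx, residueVec_sum_smul, map_sum]
  simp only [map_smul]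
  exact sum_mem fun i _ => smul_mem _ _ (subset_span ⟨i, rfl⟩)

theorem exists_mem_linearIndependent_residueVec_sumElim [Fintype ι] {N : Submodule R (ι → R)}
    (hN : LinearMap.ker (residueVec ι) ≤ N) {κ : Type*} [Fintype κ] {w : κ → ι → R}
    (hw_span : ∀ x, ∃ c : κ → R, x - ∑ i, c i • w i ∈ N)
    (hw_ind : ∀ c : κ → R, ∑ i, c i • w i ∈ N → ∀ i, c i ∈ maximalIdeal R) :
    ∃ (m : ℕ) (u : Fin m → ι → R), (∀ j, u j ∈ N) ∧
      LinearIndependent (ResidueField R) (residueVec ι ∘ Sum.elim u w) ∧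
      m + Fintype.card κ = Fintype.card ι := by
  have hli_w := linearIndependent_mkQ_residueSpan hN hw_ind
  let bQ := Module.Basis.mk hli_w (span_range_mkQ_residueSpan_eq_top hw_span).ge
  let bW := Module.finBasis (ResidueField R) (residueSpan N)
  have hlift : ∀ j, ∃ x ∈ N, residueVec ι x = bW j := fun j => by
    obtain ⟨x, hx⟩ := residueVec_surjective (bW j : ι → ResidueField R)
    exact ⟨x, (residueVec_mem_residueSpan_iff hN).mp (hx ▸ (bW j).2), hx⟩
  choose u huN hu using hlift
  have hq : residueVec ι ∘ Sum.elim u w =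
      Sum.elim (fun j => (bW j : ι → ResidueField R)) (residueVec ι ∘ w) := by
    ext (j | i) : 1 <;> simp [hu]
  refine ⟨_, u, huN, hq ▸ bW.linearIndependent.sumElim_of_quotient _ hli_w, ?_⟩
  rw [← Module.finrank_fintype_fun_eq_card (ResidueField R) (η := ι),
    ← (residueSpan N).finrank_quotient_add_finrank, Module.finrank_eq_card_basis bQ, add_comm]

end Residue

open Matrix in
theorem associated_pow_det_of_quotDim {R ι : Type} [CommRing R] [IsDomain R] [IsLocalRing R]
    [Fintype ι] [DecidableEq ι] {π : R} (hπ : Ideal.span {π} = maximalIdeal R)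
    (G : Matrix ι ι R) (hπG : ∀ x, π • x ∈ span R (Set.range G.row)) {d : ℕ}
    (hd : quotDim R π Set.univ (span R (Set.range G.row)) d) : Associated (π ^ d) G.det := by
  obtain ⟨w, -, hspan, hind⟩ := hd
  obtain ⟨m, u, huN, hli, hcard⟩ := exists_mem_linearIndependent_residueVec_sumElim
    (ker_residueVec_le hπ hπG) (fun x => hspan x trivial) (hπ ▸ hind)
  let e : ι ≃ Fin m ⊕ Fin d := (Fintype.equivOfCardEq (by simpa using hcard)).symm
  let E : Matrix ι ι R := of fun i => Sum.elim u w (e i)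
  have hE : IsUnit E.det := isUnit_det_of_linearIndependent_map_residue (hli.comp _ e.injective)
  let F : Matrix ι ι R := of fun i => Sum.elim u (π • w) (e i)
  have hFE : F = diagonal (fun i => Sum.elim 1 (fun _ => π) (e i)) * E := by
    ext i j
    rcases he : e i with k | k <;> simp [F, E, diagonal_mul, he]
  have hFdet : F.det = π ^ d * E.det := by
    rw [hFE, det_mul, det_diagonal, e.prod_comp (Sum.elim 1 fun _ => π), Fintype.prod_sum_type]
    simp
  have hFG : span R (Set.range F.row) = span R (Set.range G.row) := by
    refine (congrArg (span R) (e.surjective.range_comp _)).trans ?_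
    refine span_range_sumElim_smul_eq ?_ huN hπG hind
    rw [← e.surjective.range_comp]
    exact span_row_eq_top_of_isUnit_det hE
  have hdet := associated_det_of_span_row_eq hFG
  rw [hFdet] at hdet
  exact (associated_mul_unit_right (π ^ d) _ hE).trans hdet

theorem quotDim_univ_comap {R M V : Type} [CommRing R] [AddCommGroup M] [Module R M]
    [AddCommGroup V] [Module R V] {π : R} {S : Set V} {Λ : Submodule R V} {d : ℕ}
    (τ : M →ₗ[R] V) (hτ : (LinearMap.range τ : Set V) = S) (h : quotDim R π S Λ d) :
    quotDim R π Set.univ (Λ.comap τ) d := by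
  obtain ⟨v, hvS, hspan, hind⟩ := h
  choose x hx using fun i => (hτ ▸ hvS i : v i ∈ (LinearMap.range τ : Set V))
  refine ⟨x, fun _ => trivial, fun y _ => ?_, fun c hc => hind c ?_⟩
  · obtain ⟨c, hc⟩ := hspan (τ y) (hτ ▸ ⟨y, rfl⟩)
    exact ⟨c, by simpa [hx] using hc⟩
  · simpa [hx] using hc

theorem Module.Basis.span_range_coe {R M ι : Type*} [CommRing R] [AddCommGroup M] [Module R M]
    {Λ : Submodule R M} (b : Module.Basis ι R Λ) : span R (Set.range fun i => (b i : M)) = Λ := by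
  have := congrArg (map Λ.subtype) b.span_eq
  rwa [map_span, Submodule.map_top, range_subtype, ← Set.range_comp] at this

section HermitianLattice

variable {B L V ι : Type} [CommRing B] [Field L] [Algebra B L] [AddCommGroup V] [Module L V]
  [Module B V] [IsScalarTower B L V] {σ : L →+* L} {H : V →ₗ[L] V →ₛₗ[σ] L}

theorem Module.Basis.span_range_coe_eq_top {Λ : Submodule B V} (hΛ : span L (Λ : Set V) = ⊤)
    (b : Module.Basis ι B Λ) : span L (Set.range fun i => (b i : V)) = ⊤ := by
  rw [← span_span_of_tower B, b.span_range_coe, hΛ]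

theorem LinearMap.SeparatingLeft.eq_zero_of_forall_apply_eq_zero (hH : H.SeparatingLeft)
    {b : ι → V} (hb : span L (Set.range b) = ⊤) {v : V} (hv : ∀ j, H v (b j) = 0) : v = 0 :=
  hH v fun w => by
    rw [show H v = 0 from LinearMap.ext_on hb (by rintro _ ⟨j, rfl⟩; exact hv j)]
    rfl

theorem LinearMap.SeparatingLeft.exists_dual_family [Fintype ι] [DecidableEq ι]
    (hH : H.SeparatingLeft) {b : ι → V} (hb : span L (Set.range b) = ⊤)
    (hG : IsUnit (Matrix.of fun i j => H (b i) (b j)).det) :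
    ∃ b' : ι → V, (∀ i j, H (b' i) (b j) = if i = j then 1 else 0) ∧
      ∀ v, ∑ j, H v (b j) • b' j = v := by
  set G := Matrix.of fun i j => H (b i) (b j)
  set b' := fun i => ∑ k, G⁻¹ i k • b k
  have hdual : ∀ i j, H (b' i) (b j) = if i = j then 1 else 0 := fun i j => by
    simpa [b', Matrix.mul_apply, Matrix.one_apply, G] using
      congrFun (congrFun (G.nonsing_inv_mul hG) i) j
  refine ⟨b', hdual, fun v => eq_of_sub_eq_zero ?_⟩
  exact hH.eq_zero_of_forall_apply_eq_zero hb fun l => by simp [hdual]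

theorem LinearMap.SeparatingLeft.det_gram_ne_zero [IsDomain B] [Fintype ι] [DecidableEq ι]
    (hH : H.SeparatingLeft) {Λ : Submodule B V} (hΛ : span L (Λ : Set V) = ⊤)
    (b : Module.Basis ι B Λ) {G : Matrix ι ι B}
    (hG : ∀ i j, algebraMap B L (G i j) = H (b i) (b j)) : G.det ≠ 0 := by
  intro h0
  obtain ⟨c, hc0, hc⟩ := Matrix.exists_vecMul_eq_zero_iff.mpr h0
  have hcb : ∑ i, c i • (b i : V) = 0 :=
    hH.eq_zero_of_forall_apply_eq_zero (b.span_range_coe_eq_top hΛ) fun j => by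
      simpa [Matrix.vecMul, dotProduct, hG, Algebra.smul_def] using
        congrArg (algebraMap B L) (congrFun hc j)
  refine hc0 (funext (Fintype.linearIndependent_iff.mp b.linearIndependent c ?_))
  exact Subtype.ext (by simpa using hcb)

theorem mem_hermDual_iff_of_basis [Fintype ι]
    (hσB : ∀ c : B, σ (algebraMap B L c) ∈ (algebraMap B L).range)
    {Λ : Submodule B V} (b : Module.Basis ι B Λ) {v : V} :
    v ∈ hermDual B (fun v w => H v w) Λ ↔ ∀ j, H v (b j) ∈ (algebraMap B L).range := by
  refine ⟨fun hv j => hv _ (b j).2, fun hv m hm => ?_⟩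
  change H v ((⟨m, hm⟩ : Λ) : V) ∈ (algebraMap B L).range
  rw [← b.sum_repr ⟨m, hm⟩, coe_sum, map_sum]
  refine Subring.sum_mem _ fun j _ => ?_
  rw [coe_smul, ← algebraMap_smul L, map_smulₛₗ, smul_eq_mul]
  exact Subring.mul_mem _ (hσB _) (hv j)

theorem LinearMap.SeparatingLeft.exists_linearMap_range_eq_hermDual [IsDomain B] [Fintype ι]
    [DecidableEq ι] (hH : H.SeparatingLeft) (hinj : Function.Injective (algebraMap B L))
    (hσB : ∀ c : B, σ (algebraMap B L c) ∈ (algebraMap B L).range)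
    {Λ : Submodule B V} (hΛ : span L (Λ : Set V) = ⊤) (b : Module.Basis ι B Λ)
    {G : Matrix ι ι B} (hG : ∀ i j, algebraMap B L (G i j) = H (b i) (b j)) :
    ∃ τ : (ι → B) →ₗ[B] V, (LinearMap.range τ : Set V) = hermDual B (fun v w => H v w) Λ ∧
      Λ.comap τ = span B (Set.range G.row) := by
  have hGL : IsUnit (Matrix.of fun i j => H (b i) (b j)).det := by
    rw [show Matrix.of (fun i j => H (b i) (b j)) = (algebraMap B L).mapMatrix G by
      ext; simp [hG], ← RingHom.map_det]
    exact isUnit_iff_ne_zero.mpr ((map_ne_zero_iff _ hinj).mpr (hH.det_gram_ne_zero hΛ b hG))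
  obtain ⟨b', hdual, hexp⟩ := hH.exists_dual_family (b.span_range_coe_eq_top hΛ) hGL
  let τ := Fintype.linearCombination B b'
  have hτ : ∀ x j, H (τ x) (b j) = algebraMap B L (x j) := fun x j => by
    simp [τ, Fintype.linearCombination_apply, Algebra.smul_def, hdual]
  have hτ_eq : ∀ v x, (∀ j, H v (b j) = algebraMap B L (x j)) → τ x = v := fun v x hx => by
    conv_rhs => rw [← hexp v]
    simp [τ, Fintype.linearCombination_apply, hx, algebraMap_smul]
  have hτinj : Function.Injective τ := fun x y hxy =>
    funext fun j => hinj (by rw [← hτ, ← hτ, hxy])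
  refine ⟨τ, Set.ext fun v => ?_, ?_⟩
  · rw [mem_hermDual_iff_of_basis hσB b]
    refine ⟨?_, fun hv => ?_⟩
    · rintro ⟨x, rfl⟩ j
      exact ⟨x j, (hτ x j).symm⟩
    · choose c hc using hv
      exact ⟨c, hτ_eq v c fun j => (hc j).symm⟩
  · have hmap : map τ (span B (Set.range G.row)) = Λ := by
      rw [map_span, ← Set.range_comp, ← b.span_range_coe]
      exact congrArg _ (congrArg _ (funext fun i => hτ_eq _ _ fun j => (hG i j).symm))
    rw [← hmap, comap_map_eq_of_injective hτinj]

end HermitianLattice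

theorem unramified_valuation_det_congr_dim_general
    {A K L B : Type}
    [CommRing A]
    [Field K]
    [Field L] [Algebra K L]
    (σ : L ≃ₐ[K] L)
    [CommRing B] [IsDomain B] [IsDiscreteValuationRing B]
    [Algebra A B] [Algebra B L] [Algebra A L]
    [IsIntegralClosure B A L]
    (hσB : ∀ b : B, ∃ b' : B, σ (algebraMap B L b) = algebraMap B L b')
    -- L/K is unramified: a uniformizer πA of A generates the maximal ideal of B
    (πB : B)
    (hunram : Ideal.span {πB} = IsLocalRing.maximalIdeal B)
    {V : Type} [AddCommGroup V] [Module L V]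
    [Module B V] [IsScalarTower B L V]
    (H : V → V → L)
    (haddl : ∀ v v' w : V, H (v + v') w = H v w + H v' w)
    (haddr : ∀ v w w' : V, H v (w + w') = H v w + H v w')
    (hsmul : ∀ (a : L) (v w : V), H (a • v) w = a * H v w)
    (hherm : ∀ v w : V, H v w = σ (H w v))
    (hnd : ∀ v : V, (∀ w : V, H v w = 0) → v = 0)
    -- Λ is a square-free lattice with B-basis b
    (Λ : Submodule B V) (hfull : Submodule.span L (Λ : Set V) = ⊤)
    (hint : (Λ : Set V) ⊆ hermDual B H (Λ : Set V))
    (hsf : ∀ v ∈ hermDual B H (Λ : Set V), πB • v ∈ Λ)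
    (n : ℕ) (b : Module.Basis (Fin n) B Λ) :
    ∀ d : ℕ, quotDim B πB (hermDual B H (Λ : Set V)) Λ d →
      ∃ (k : ℕ) (u : B), IsUnit u ∧
        (Matrix.of fun i j : Fin n => H (b i : V) (b j : V)).det =
          algebraMap B L (u * πB ^ k) ∧
        k % 2 = d % 2 := by
  intro d hd
  let Hs : V →ₗ[L] V →ₛₗ[(σ : L →+* L)] L :=
    LinearMap.mk₂'ₛₗ (RingHom.id L) (σ : L →+* L) H haddl hsmul haddr fun a v w => by
      rw [hherm, hsmul, map_mul, ← hherm]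
      rfl
  obtain ⟨G, hG⟩ : ∃ G : Matrix (Fin n) (Fin n) B,
      ∀ i j, algebraMap B L (G i j) = H (b i) (b j) :=
    ⟨_, fun i j => (hint (b i).2 (b j) (b j).2).choose_spec⟩
  obtain ⟨τ, hτS, hτΛ⟩ := LinearMap.SeparatingLeft.exists_linearMap_range_eq_hermDual (H := Hs)
    hnd (IsIntegralClosure.algebraMap_injective B A L) (fun c => (hσB c).imp fun _ h => h.symm)
    hfull b hG
  have hπG : ∀ x, πB • x ∈ span B (Set.range G.row) := fun x => by
    rw [← hτΛ, mem_comap, map_smul]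
    exact hsf _ (hτS ▸ ⟨x, rfl⟩)
  obtain ⟨u, hu⟩ :=
    associated_pow_det_of_quotDim hunram G hπG (hτΛ ▸ quotDim_univ_comap τ hτS hd)
  refine ⟨d, u, u.isUnit, ?_, rfl⟩
  rw [show (Matrix.of fun i j => H (b i) (b j)) = (algebraMap B L).mapMatrix G by ext; simp [hG],
    ← RingHom.map_det, ← hu, mul_comm]

/-- In the unramified local situation, for a square-free lattice `Λ` with
`B`-basis `b`, the `π`-adic valuation of the Gram determinant of `H` on `b` is congruent
modulo 2 to `dim_F(Λ*/Λ)`. -/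
theorem unramified_valuation_det_congr_dim
    {A K L B : Type}
    [CommRing A] [IsDomain A] [IsDiscreteValuationRing A] [CharZero A]
    [IsAdicComplete (IsLocalRing.maximalIdeal A) A]
    [Field K] [Algebra A K] [IsFractionRing A K]
    [Field L] [Algebra K L] [Algebra.IsSeparable K L]
    (hquad : Module.finrank K L = 2)
    (σ : L ≃ₐ[K] L) (hσne : σ ≠ AlgEquiv.refl) (hσ2 : ∀ x : L, σ (σ x) = x)
    [CommRing B] [IsDomain B] [IsDiscreteValuationRing B]
    [Algebra A B] [Algebra B L] [Algebra A L]
    [IsScalarTower A B L] [IsScalarTower A K L]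
    [IsIntegralClosure B A L]
    (hσB : ∀ b : B, ∃ b' : B, σ (algebraMap B L b) = algebraMap B L b')
    -- L/K is unramified: a uniformizer πA of A generates the maximal ideal of B
    (πA : A) (hπA : Ideal.span {πA} = IsLocalRing.maximalIdeal A)
    (πB : B) (hπB : πB = algebraMap A B πA)
    (hunram : Ideal.span {πB} = IsLocalRing.maximalIdeal B)
    {V : Type} [AddCommGroup V] [Module L V] [FiniteDimensional L V]
    [Module B V] [IsScalarTower B L V]
    (H : V → V → L)
    (haddl : ∀ v v' w : V, H (v + v') w = H v w + H v' w)
    (haddr : ∀ v w w' : V, H v (w + w') = H v w + H v w')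
    (hsmul : ∀ (a : L) (v w : V), H (a • v) w = a * H v w)
    (hherm : ∀ v w : V, H v w = σ (H w v))
    (hnd : ∀ v : V, (∀ w : V, H v w = 0) → v = 0)
    -- Λ is a square-free lattice with B-basis b
    (Λ : Submodule B V) (hFG : Λ.FG) (hfull : Submodule.span L (Λ : Set V) = ⊤)
    (hint : (Λ : Set V) ⊆ hermDual B H (Λ : Set V))
    (hsf : ∀ v ∈ hermDual B H (Λ : Set V), πB • v ∈ Λ)
    (n : ℕ) (b : Module.Basis (Fin n) B Λ) :
    ∀ d : ℕ, quotDim B πB (hermDual B H (Λ : Set V)) Λ d →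
      ∃ (k : ℕ) (u : B), IsUnit u ∧
        (Matrix.of fun i j : Fin n => H (b i : V) (b j : V)).det =
          algebraMap B L (u * πB ^ k) ∧
        k % 2 = d % 2 :=
  unramified_valuation_det_congr_dim_general (A := A) σ hσB πB hunram H haddl haddr hsmul hherm hnd
    Λ hfull hint hsf n b
end

section
/- In the local setting, assume L/K is ramified and non-dyadic, i.e. the maximal ideal of A generates the square of the maximal ideal of B, 2 is a unit of A, and the uniformizer π of B is chosen with σ(π) = −π. Then for every square-free B-lattice Λ in (V,H), the map (ℓ + Λ, m + Λ) ↦ π·H(ℓ,m) + πB is a well-defined nondegenerate alternating F-bilinear form on the F-vector space Λ*/Λ, where F = B/πB. -/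
open Module IsLocalRing

theorem AlgEquiv.mem_range_algebraMap_of_apply_eq {K L : Type*} [Field K] [Field L] [Algebra K L]
    (hquad : finrank K L = 2) {σ : L ≃ₐ[K] L} (hσ : σ ≠ AlgEquiv.refl) {x : L} (hx : σ x = x) :
    x ∈ Set.range (algebraMap K L) := by
  have := Subalgebra.isSimpleOrder_of_finrank_prime K L (hquad ▸ Nat.prime_two)
  let E := AlgHom.equalizer (σ : L →ₐ[K] L) (AlgHom.id K L)
  have hE : E ≠ ⊤ := fun h => hσ <| AlgEquiv.ext fun y => (h ▸ Algebra.mem_top : y ∈ E)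
  exact ((IsSimpleOrder.eq_bot_or_eq_top E).resolve_right hE ▸ hx : x ∈ (⊥ : Subalgebra K L))

namespace LinearMap

variable {L V : Type*} [Field L] [AddCommGroup V] [Module L V] {σ : L →+* L}
  {ι : Type*} [DecidableEq ι]

theorem SeparatingLeft.exists_apply_basis_eq_ite [Fintype ι] {Φ : V →ₗ[L] V →ₛₗ[σ] L}
    (hΦ : Φ.SeparatingLeft) (e : Basis ι L V) :
    ∃ f : ι → V, ∀ i j, Φ (f i) (e j) = if i = j then 1 else 0 := by
  have : FiniteDimensional L V := e.finiteDimensional_of_finite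
  let ψ : V →ₗ[L] ι → L := pi fun j => Φ.flip (e j)
  have hψ : Function.Injective ψ := by
    rw [← ker_eq_bot, ker_eq_bot']
    intro v hv
    refine hΦ v fun w => ?_
    rw [show Φ v = 0 from e.ext fun j => congrFun hv j, zero_apply]
  have hdim : finrank L V = finrank L (ι → L) := by
    rw [finrank_eq_card_basis e, Module.finrank_fintype_fun_eq_card]
  choose f hf using (injective_iff_surjective_of_finrank_eq_finrank hdim).1 hψ
  refine ⟨fun i => f (Pi.single i 1), fun i j => ?_⟩
  have hij := congrFun (hf (Pi.single i 1)) j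
  rw [Pi.single_apply] at hij
  simp only [eq_comm (a := j)] at hij
  exact hij

theorem apply_eq_repr_of_apply_basis_eq_ite {Φ : V →ₗ[L] V →ₛₗ[σ] L}
    (hherm : ∀ v w, Φ v w = σ (Φ w v)) {e : Basis ι L V} {f : ι → V}
    (hf : ∀ i j, Φ (f i) (e j) = if i = j then 1 else 0) (v : V) (i : ι) :
    Φ v (f i) = e.repr v i := by
  have hflip : Φ.flip (f i) = e.coord i := e.ext fun j => by
    rw [flip_apply, hherm, hf, Basis.coord_apply, Basis.repr_self_apply]
    rcases eq_or_ne i j with rfl | hij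
    · simp
    · simp [hij, hij.symm]
  exact LinearMap.congr_fun hflip v

theorem apply_eq_map_repr_of_apply_basis_eq_ite [Fintype ι] {Φ : V →ₗ[L] V →ₛₗ[σ] L}
    {e : Basis ι L V} {f : ι → V} (hf : ∀ i j, Φ (f i) (e j) = if i = j then 1 else 0)
    (v : V) (i : ι) :
    Φ (f i) v = σ (e.repr v i) := by
  calc Φ (f i) v = Φ (f i) (∑ j, e.repr v j • e j) := by rw [e.sum_repr]
    _ = σ (e.repr v i) := by
      simp only [map_sum, map_smulₛₗ, hf, smul_eq_mul, mul_ite, mul_one, mul_zero,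
        Finset.sum_ite_eq, Finset.mem_univ, if_true]

end LinearMap

section Lattice

variable {B L V : Type*} [CommRing B] [IsDomain B] [IsPrincipalIdealRing B] [Field L]
  [Algebra B L] [IsFractionRing B L] [AddCommGroup V] [Module L V] [Module B V]
  [IsScalarTower B L V]

theorem Submodule.exists_basis_mem_iff_repr_mem_range (Λ : Submodule B V) (hFG : Λ.FG)
    (hspan : span L (Λ : Set V) = ⊤) :
    ∃ (n : ℕ) (e : Basis (Fin n) L V), ∀ v, v ∈ Λ ↔ ∀ i, e.repr v i ∈ (algebraMap B L).range := by
  have : Module.Finite B Λ := Module.Finite.iff_fg.2 hFG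
  have : IsTorsionFree B V := .trans_faithfulSMul B L V
  obtain ⟨n, bΛ⟩ := Module.basisOfFiniteTypeTorsionFree' (R := B) (M := Λ)
  let e₀ : Fin n → V := fun i => bΛ i
  have hsum : ∀ v ∈ Λ, ∃ c : Fin n → B, v = ∑ i, algebraMap B L (c i) • e₀ i := by
    intro v hv
    refine ⟨bΛ.repr ⟨v, hv⟩, ?_⟩
    have hrepr := congrArg Subtype.val (bΛ.sum_repr ⟨v, hv⟩)
    simp only [Submodule.coe_sum, Submodule.coe_smul] at hrepr
    simp only [algebraMap_smul, e₀, hrepr]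
  have hli : LinearIndependent L e₀ :=
    (bΛ.linearIndependent.map' Λ.subtype Λ.ker_subtype).localization L (nonZeroDivisors B)
  have hspan' : ⊤ ≤ span L (Set.range e₀) := by
    rw [← hspan, span_le]
    intro v hv
    obtain ⟨c, rfl⟩ := hsum v hv
    exact sum_mem fun i _ => smul_mem _ _ (subset_span (Set.mem_range_self i))
  let e := Basis.mk hli hspan'
  have he : ∀ i, e₀ i = e i := fun i => (Basis.mk_apply hli hspan' i).symm
  refine ⟨n, e, fun v => ⟨fun hv i => ?_, fun hv => ?_⟩⟩
  · obtain ⟨c, rfl⟩ := hsum v hv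
    exact ⟨c i, by simp only [he, e.repr_sum_self]⟩
  · choose c hc using hv
    rw [← e.sum_repr v]
    refine sum_mem fun i _ => ?_
    rw [← hc, algebraMap_smul, ← he]
    exact smul_mem _ _ (bΛ i).2

end Lattice

section Ramification

variable {A B : Type*} [CommRing A] [IsDomain A] [IsDiscreteValuationRing A]
  [CommRing B] [IsDomain B] [IsDiscreteValuationRing B] [Algebra A B] {π : B}

theorem associated_algebraMap_pow_uniformizer (hπ : Irreducible π)
    (hram : (maximalIdeal A).map (algebraMap A B) = maximalIdeal B ^ 2) {a : A} (ha : a ≠ 0) :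
    ∃ n, Associated (algebraMap A B a) (π ^ (2 * n)) := by
  obtain ⟨t, ht⟩ := IsDiscreteValuationRing.exists_irreducible A
  obtain ⟨n, han⟩ := IsDiscreteValuationRing.associated_pow_irreducible ha ht
  have htπ : Associated (algebraMap A B t) (π ^ 2) := by
    rw [← Ideal.span_singleton_eq_span_singleton, ← Ideal.span_singleton_pow,
      ← (IsDiscreteValuationRing.irreducible_iff_uniformizer π).1 hπ, ← hram,
      (IsDiscreteValuationRing.irreducible_iff_uniformizer t).1 ht, Ideal.map_span,
      Set.image_singleton]
  refine ⟨n, ?_⟩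
  rw [pow_mul]
  exact (han.map (algebraMap A B)).trans (by simpa only [map_pow] using htπ.pow_pow)

theorem dvd_of_algebraMap_mul_eq_algebraMap_mul (hπ : Irreducible π)
    (hram : (maximalIdeal A).map (algebraMap A B) = maximalIdeal B ^ 2) {x y : A} {b : B}
    (hy : y ≠ 0) (h : algebraMap A B y * b = algebraMap A B x * π) : π ∣ b := by
  rcases eq_or_ne b 0 with rfl | hb
  · exact dvd_zero π
  obtain ⟨n, hyn⟩ := associated_algebraMap_pow_uniformizer hπ hram hy
  have hx : x ≠ 0 := by
    rintro rfl
    rw [map_zero, zero_mul, mul_eq_zero] at h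
    exact h.elim (hyn.ne_zero_iff.2 (pow_ne_zero _ hπ.ne_zero)) hb
  obtain ⟨m, hxm⟩ := associated_algebraMap_pow_uniformizer hπ hram hx
  obtain ⟨k, hbk⟩ := IsDiscreteValuationRing.associated_pow_irreducible hb hπ
  have hassoc : Associated (π ^ (2 * n + k)) (π ^ (2 * m + 1)) := by
    rw [pow_add, pow_succ]
    exact (hyn.symm.mul_mul hbk.symm).trans (h ▸ hxm.mul_right π)
  have hk : k ≠ 0 := by
    rintro rfl
    have h1 := (pow_dvd_pow_iff hπ.ne_zero hπ.not_isUnit).1 hassoc.dvd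
    have h2 := (pow_dvd_pow_iff hπ.ne_zero hπ.not_isUnit).1 hassoc.symm.dvd
    omega
  exact (dvd_pow_self π hk).trans hbk.symm.dvd

theorem algebraMap_mem_range_of_uniformizer_mul_mem_range {K L : Type*} [Field K] [Algebra A K]
    [IsFractionRing A K] [Field L] [Algebra K L] [Algebra B L] [Algebra A L]
    [IsScalarTower A B L] [IsScalarTower A K L] (hπ : Irreducible π)
    (hram : (maximalIdeal A).map (algebraMap A B) = maximalIdeal B ^ 2)
    (hBL : Function.Injective (algebraMap B L)) {k : K}
    (hk : algebraMap B L π * algebraMap K L k ∈ (algebraMap B L).range) :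
    algebraMap K L k ∈ (algebraMap B L).range := by
  obtain ⟨b, hb⟩ := hk
  obtain ⟨x, y, hy, rfl⟩ := IsFractionRing.div_surjective A k
  have hyL : algebraMap A L y ≠ 0 := by
    rw [IsScalarTower.algebraMap_apply A K L, map_ne_zero_iff _ (algebraMap K L).injective]
    exact IsFractionRing.to_map_ne_zero_of_mem_nonZeroDivisors hy
  have hyx : algebraMap A B y * b = algebraMap A B x * π := by
    apply hBL
    rw [map_div₀, ← IsScalarTower.algebraMap_apply, ← IsScalarTower.algebraMap_apply] at hb
    simp only [map_mul, ← IsScalarTower.algebraMap_apply, hb]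
    field_simp
  obtain ⟨c, rfl⟩ :=
    dvd_of_algebraMap_mul_eq_algebraMap_mul hπ hram (nonZeroDivisors.ne_zero hy) hyx
  refine ⟨c, mul_left_cancel₀ ((map_ne_zero_iff _ hBL).2 hπ.ne_zero) ?_⟩
  rw [← map_mul, hb]

end Ramification

namespace hermDual

variable {B L V : Type} [CommRing B] [Field L] [Algebra B L] [AddCommGroup V] [Module L V]
  [Module B V] {σ : L →+* L} {Φ : V →ₗ[L] V →ₛₗ[σ] L} {Λ : Submodule B V}

theorem algebraMap_mul_apply_mem_range [IsScalarTower B L V]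
    (hherm : ∀ v w, Φ v w = σ (Φ w v))
    (hσB : ∀ x ∈ (algebraMap B L).range, σ x ∈ (algebraMap B L).range) {c : B}
    (hc : ∀ v ∈ hermDual B (fun v w => Φ v w) Λ, c • v ∈ Λ) {ℓ m : V}
    (hℓ : ℓ ∈ hermDual B (fun v w => Φ v w) Λ) (hm : m ∈ hermDual B (fun v w => Φ v w) Λ) :
    algebraMap B L c * Φ ℓ m ∈ (algebraMap B L).range := by
  rw [← smul_eq_mul, ← LinearMap.smul_apply, ← map_smul, algebraMap_smul, hherm]
  exact hσB _ (hm _ (hc ℓ hℓ))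

theorem apply_sub_apply_mem_range (hherm : ∀ v w, Φ v w = σ (Φ w v))
    (hσB : ∀ x ∈ (algebraMap B L).range, σ x ∈ (algebraMap B L).range) {ℓ ℓ' m m' : V}
    (hℓ' : ℓ' ∈ hermDual B (fun v w => Φ v w) Λ) (hm : m ∈ hermDual B (fun v w => Φ v w) Λ)
    (hℓℓ' : ℓ - ℓ' ∈ Λ) (hmm' : m - m' ∈ Λ) :
    Φ ℓ m - Φ ℓ' m' ∈ (algebraMap B L).range := by
  have hsplit : Φ ℓ m - Φ ℓ' m' = σ (Φ m (ℓ - ℓ')) + Φ ℓ' (m - m') := by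
    rw [← hherm, map_sub, map_sub, LinearMap.sub_apply]
    ring
  rw [hsplit]
  exact add_mem (hσB _ (hm _ hℓℓ')) (hℓ' _ hmm')

theorem hermDual_subset [IsScalarTower B L V] [IsDomain B] [IsPrincipalIdealRing B]
    [IsFractionRing B L] (hherm : ∀ v w, Φ v w = σ (Φ w v))
    (hσB : ∀ x ∈ (algebraMap B L).range, σ x ∈ (algebraMap B L).range) (hΦ : Φ.SeparatingLeft)
    (hFG : Λ.FG) (hspan : Submodule.span L (Λ : Set V) = ⊤) :
    hermDual B (fun v w => Φ v w) (hermDual B (fun v w => Φ v w) Λ) ⊆ Λ := by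
  classical
  obtain ⟨n, e, he⟩ := Λ.exists_basis_mem_iff_repr_mem_range hFG hspan
  obtain ⟨f, hf⟩ := hΦ.exists_apply_basis_eq_ite e
  have hf_mem : ∀ i, f i ∈ hermDual B (fun v w => Φ v w) Λ := fun i m hm => by
    show Φ (f i) m ∈ (algebraMap B L).range
    rw [LinearMap.apply_eq_map_repr_of_apply_basis_eq_ite hf]
    exact hσB _ ((he m).1 hm i)
  intro ℓ hℓ
  exact (he ℓ).2 fun i =>
    LinearMap.apply_eq_repr_of_apply_basis_eq_ite hherm hf ℓ i ▸ hℓ _ (hf_mem i)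

end hermDual

theorem exists_algebraMap_mul_eq_mul_iff {R S : Type*} [CommRing R] [CommRing S] [IsDomain S]
    [Algebra R S] {r : R} (hr : algebraMap R S r ≠ 0) {x : S} :
    (∃ b, algebraMap R S (r * b) = algebraMap R S r * x) ↔ x ∈ (algebraMap R S).range := by
  simp only [map_mul, mul_right_inj' hr, RingHom.mem_range]

theorem ramified_nondyadic_alternating_form_general
    {A K L B : Type}
    [CommRing A] [IsDomain A] [IsDiscreteValuationRing A]
    [Field K] [Algebra A K] [IsFractionRing A K]
    [Field L] [Algebra K L]
    (hquad : Module.finrank K L = 2)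
    (σ : L ≃ₐ[K] L) (hσne : σ ≠ AlgEquiv.refl)
    [CommRing B] [IsDomain B] [IsDiscreteValuationRing B]
    [Algebra A B] [Algebra B L] [Algebra A L]
    [IsScalarTower A B L] [IsScalarTower A K L]
    [IsIntegralClosure B A L]
    (hσB : ∀ b : B, ∃ b' : B, σ (algebraMap B L b) = algebraMap B L b')
    (π : B) (hπ : Ideal.span {π} = IsLocalRing.maximalIdeal B)
    -- L/K is ramified: the maximal ideal of A generates the square of the maximal ideal of B
    (hram : Ideal.map (algebraMap A B) (IsLocalRing.maximalIdeal A) =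
      (IsLocalRing.maximalIdeal B) ^ 2)
    {V : Type} [AddCommGroup V] [Module L V]
    [Module B V] [IsScalarTower B L V]
    (H : V → V → L)
    (haddl : ∀ v v' w : V, H (v + v') w = H v w + H v' w)
    (haddr : ∀ v w w' : V, H v (w + w') = H v w + H v w')
    (hsmul : ∀ (a : L) (v w : V), H (a • v) w = a * H v w)
    (hherm : ∀ v w : V, H v w = σ (H w v))
    (hnd : ∀ v : V, (∀ w : V, H v w = 0) → v = 0)
    -- Λ is a square-free lattice
    (Λ : Submodule B V) (hFG : Λ.FG) (hfull : Submodule.span L (Λ : Set V) = ⊤)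
    (hsf : ∀ v ∈ hermDual B H (Λ : Set V), π • v ∈ Λ) :
    -- values: π·H(ℓ,m) lies in (the image of) B for ℓ, m ∈ Λ*
    (∀ ℓ ∈ hermDual B H (Λ : Set V), ∀ m ∈ hermDual B H (Λ : Set V),
      ∃ b : B, algebraMap B L b = algebraMap B L π * H ℓ m) ∧
    -- well-definedness modulo Λ in both arguments
    (∀ ℓ ℓ' m m' : V, ℓ ∈ hermDual B H (Λ : Set V) → ℓ' ∈ hermDual B H (Λ : Set V) →
      m ∈ hermDual B H (Λ : Set V) → m' ∈ hermDual B H (Λ : Set V) →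
      ℓ - ℓ' ∈ Λ → m - m' ∈ Λ →
      ∃ b : B, algebraMap B L (π * b) =
        algebraMap B L π * H ℓ m - algebraMap B L π * H ℓ' m') ∧
    -- F-bilinearity on representatives
    (∀ (b : B) (ℓ m : V), ℓ ∈ hermDual B H (Λ : Set V) → m ∈ hermDual B H (Λ : Set V) →
      ∃ c : B, algebraMap B L (π * c) =
        algebraMap B L π * H (b • ℓ) m - algebraMap B L b * (algebraMap B L π * H ℓ m)) ∧
    -- the induced form is alternating
    (∀ ℓ ∈ hermDual B H (Λ : Set V),
      ∃ b : B, algebraMap B L (π * b) = algebraMap B L π * H ℓ ℓ) ∧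
    -- the induced form is nondegenerate on Λ*/Λ
    (∀ ℓ ∈ hermDual B H (Λ : Set V),
      (∀ m ∈ hermDual B H (Λ : Set V),
        ∃ b : B, algebraMap B L (π * b) = algebraMap B L π * H ℓ m) →
      ℓ ∈ Λ) := by
  have : FiniteDimensional K L := Module.finite_of_finrank_eq_succ hquad
  have : IsFractionRing B L := IsIntegralClosure.isFractionRing_of_finite_extension A K L B
  have hBL : Function.Injective (algebraMap B L) := IsIntegralClosure.algebraMap_injective B A L
  have hπirr : Irreducible π := (IsDiscreteValuationRing.irreducible_iff_uniformizer π).2 hπ.symm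
  have hπL : algebraMap B L π ≠ 0 := (map_ne_zero_iff _ hBL).2 hπirr.ne_zero
  have hσB' : ∀ x ∈ (algebraMap B L).range, σ x ∈ (algebraMap B L).range := by
    rintro _ ⟨b, rfl⟩
    obtain ⟨b', hb'⟩ := hσB b
    exact ⟨b', hb'.symm⟩
  let Φ : V →ₗ[L] V →ₛₗ[(σ : L →+* L)] L := LinearMap.mk₂'ₛₗ _ _ H haddl hsmul haddr
    fun a v w => by rw [hherm, hsmul, map_mul, ← hherm]; rfl
  have hvalues : ∀ ℓ ∈ hermDual B H Λ, ∀ m ∈ hermDual B H Λ,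
      algebraMap B L π * H ℓ m ∈ (algebraMap B L).range := fun ℓ hℓ m hm =>
    hermDual.algebraMap_mul_apply_mem_range (Φ := Φ) hherm hσB' hsf hℓ hm
  refine ⟨hvalues, ?_, ?_, ?_, ?_⟩
  · intro ℓ ℓ' m m' _ hℓ' hm _ hℓℓ' hmm'
    rw [← mul_sub, exists_algebraMap_mul_eq_mul_iff hπL]
    exact hermDual.apply_sub_apply_mem_range (Φ := Φ) hherm hσB' hℓ' hm hℓℓ' hmm'
  · intro b ℓ m _ _
    refine ⟨0, ?_⟩
    rw [mul_zero, map_zero, ← algebraMap_smul L b ℓ, hsmul]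
    ring
  · intro ℓ hℓ
    rw [exists_algebraMap_mul_eq_mul_iff hπL]
    obtain ⟨k, hk⟩ := AlgEquiv.mem_range_algebraMap_of_apply_eq hquad hσne (hherm ℓ ℓ).symm
    have hπk : algebraMap B L π * algebraMap K L k ∈ (algebraMap B L).range :=
      hk ▸ hvalues ℓ hℓ ℓ hℓ
    rw [← hk]
    exact algebraMap_mem_range_of_uniformizer_mul_mem_range hπirr hram hBL hπk
  · intro ℓ _ hdual
    exact hermDual.hermDual_subset (Φ := Φ) hherm hσB' hnd hFG hfull
      fun m hm => (exists_algebraMap_mul_eq_mul_iff hπL).1 (hdual m hm)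

/-- In the ramified non-dyadic local situation with `σ(π) = -π`, for every
square-free lattice `Λ` the map `(ℓ + Λ, m + Λ) ↦ π·H(ℓ,m) + πB` is a well-defined
nondegenerate alternating `F`-bilinear form on `Λ*/Λ` (stated on representatives). -/
theorem ramified_nondyadic_alternating_form
    {A K L B : Type}
    [CommRing A] [IsDomain A] [IsDiscreteValuationRing A] [CharZero A]
    [IsAdicComplete (IsLocalRing.maximalIdeal A) A]
    [Field K] [Algebra A K] [IsFractionRing A K]
    [Field L] [Algebra K L] [Algebra.IsSeparable K L]
    (hquad : Module.finrank K L = 2)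
    (σ : L ≃ₐ[K] L) (hσne : σ ≠ AlgEquiv.refl) (hσ2 : ∀ x : L, σ (σ x) = x)
    [CommRing B] [IsDomain B] [IsDiscreteValuationRing B]
    [Algebra A B] [Algebra B L] [Algebra A L]
    [IsScalarTower A B L] [IsScalarTower A K L]
    [IsIntegralClosure B A L]
    (hσB : ∀ b : B, ∃ b' : B, σ (algebraMap B L b) = algebraMap B L b')
    (π : B) (hπ : Ideal.span {π} = IsLocalRing.maximalIdeal B)
    -- L/K is ramified: the maximal ideal of A generates the square of the maximal ideal of B
    (hram : Ideal.map (algebraMap A B) (IsLocalRing.maximalIdeal A) =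
      (IsLocalRing.maximalIdeal B) ^ 2)
    -- non-dyadic: 2 is a unit of A
    (h2 : IsUnit (2 : A))
    -- the uniformizer is chosen with σ(π) = -π
    (hσπ : σ (algebraMap B L π) = - algebraMap B L π)
    {V : Type} [AddCommGroup V] [Module L V] [FiniteDimensional L V]
    [Module B V] [IsScalarTower B L V]
    (H : V → V → L)
    (haddl : ∀ v v' w : V, H (v + v') w = H v w + H v' w)
    (haddr : ∀ v w w' : V, H v (w + w') = H v w + H v w')
    (hsmul : ∀ (a : L) (v w : V), H (a • v) w = a * H v w)
    (hherm : ∀ v w : V, H v w = σ (H w v))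
    (hnd : ∀ v : V, (∀ w : V, H v w = 0) → v = 0)
    -- Λ is a square-free lattice
    (Λ : Submodule B V) (hFG : Λ.FG) (hfull : Submodule.span L (Λ : Set V) = ⊤)
    (hint : (Λ : Set V) ⊆ hermDual B H (Λ : Set V))
    (hsf : ∀ v ∈ hermDual B H (Λ : Set V), π • v ∈ Λ) :
    -- values: π·H(ℓ,m) lies in (the image of) B for ℓ, m ∈ Λ*
    (∀ ℓ ∈ hermDual B H (Λ : Set V), ∀ m ∈ hermDual B H (Λ : Set V),
      ∃ b : B, algebraMap B L b = algebraMap B L π * H ℓ m) ∧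
    -- well-definedness modulo Λ in both arguments
    (∀ ℓ ℓ' m m' : V, ℓ ∈ hermDual B H (Λ : Set V) → ℓ' ∈ hermDual B H (Λ : Set V) →
      m ∈ hermDual B H (Λ : Set V) → m' ∈ hermDual B H (Λ : Set V) →
      ℓ - ℓ' ∈ Λ → m - m' ∈ Λ →
      ∃ b : B, algebraMap B L (π * b) =
        algebraMap B L π * H ℓ m - algebraMap B L π * H ℓ' m') ∧
    -- F-bilinearity on representatives
    (∀ (b : B) (ℓ m : V), ℓ ∈ hermDual B H (Λ : Set V) → m ∈ hermDual B H (Λ : Set V) →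
      ∃ c : B, algebraMap B L (π * c) =
        algebraMap B L π * H (b • ℓ) m - algebraMap B L b * (algebraMap B L π * H ℓ m)) ∧
    -- the induced form is alternating
    (∀ ℓ ∈ hermDual B H (Λ : Set V),
      ∃ b : B, algebraMap B L (π * b) = algebraMap B L π * H ℓ ℓ) ∧
    -- the induced form is nondegenerate on Λ*/Λ
    (∀ ℓ ∈ hermDual B H (Λ : Set V),
      (∀ m ∈ hermDual B H (Λ : Set V),
        ∃ b : B, algebraMap B L (π * b) = algebraMap B L π * H ℓ m) →
      ℓ ∈ Λ) :=
  ramified_nondyadic_alternating_form_general hquad σ hσne hσB π hπ hram H haddl haddr hsmul hherm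
    hnd Λ hFG hfull hsf
end

section
/- Let F be a field, V a nonzero finite-dimensional F-vector space, G a perfect group (i.e. G equals its own commutator subgroup), ρ : G → GL(V) a group homomorphism, z ∈ G, and c ∈ F an element of multiplicative order 4 (c⁴ = 1 and c² ≠ 1) with ρ(z) = c·id_V. Then dim_F V is divisible by 4. -/
/-- If a perfect group has a representation on a nonzero finite-dimensional
vector space over a field in which some element acts as `c·id` for a scalar `c` of
multiplicative order 4, then the dimension is divisible by 4. -/
theorem four_dvd_dim_of_order_four_scalar_in_perfect_group
    {F : Type} [Field F]
    {V : Type} [AddCommGroup V] [Module F V] [FiniteDimensional F V] [Nontrivial V]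
    {G : Type} [Group G] (hperf : commutator G = ⊤)
    (ρ : G →* (V ≃ₗ[F] V)) (z : G) (c : F) (hc4 : c ^ 4 = 1) (hc2 : c ^ 2 ≠ 1)
    (hz : ∀ v : V, ρ z v = c • v) :
    4 ∣ Module.finrank F V := by
  set n := Module.finrank F V
  -- the determinant character is trivial since G is perfect
  have hker : commutator G ≤ (LinearEquiv.det.comp ρ).ker :=
    Abelianization.commutator_subset_ker _
  have hz1 : LinearEquiv.det (ρ z) = 1 := by
    have : z ∈ (LinearEquiv.det.comp ρ).ker := by
      apply hker; rw [hperf]; trivial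
    simpa using this
  -- ρ z as a linear map equals c • id
  have hlm : ((ρ z : V ≃ₗ[F] V) : V →ₗ[F] V) = c • LinearMap.id := by
    ext v; simpa using hz v
  have hdet : LinearMap.det ((ρ z : V ≃ₗ[F] V) : V →ₗ[F] V) = c ^ n := by
    rw [hlm, LinearMap.det_smul, LinearMap.det_id, mul_one]
  have hc_n : c ^ n = 1 := by
    rw [← hdet, ← LinearEquiv.coe_det, hz1, Units.val_one]
  have horder : orderOf c = 4 := by
    have := orderOf_eq_prime_pow (x := c) (p := 2) (n := 1)
      (by norm_num [pow_succ]; rw [← pow_two]; exact hc2) (by norm_num; exact hc4)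
    simpa using this
  have := orderOf_dvd_of_pow_eq_one hc_n
  rwa [horder] at this
end
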